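/- arXiv:2402.00681 — 7 statements merged into one kernel-verified Lean document; each statement's English description precedes it below -/
import Mathlib

section
/- Let S ∈ ℝ^{r×T} (with T ≥ r) be such that S·Sᵀ is invertible, and assume additionally that the matrix S̃ ∈ ℝ^{r×r} formed by the first r columns of S is invertible. Set Π_S := I_T − Sᵀ(S·Sᵀ)⁻¹·S, Γ₂ := S̃⁻¹·S ∈ ℝ^{r×T}, let H̃^LS ∈ ℝ^{p×r} be the matrix of the first r columns of H_y·Π_S, and Γ₁ := H_y·Π_S − H̃^LS·Γ₂ ∈ ℝ^{p×T}. Then every H_d ∈ ℝ^{p×T} with (H_y − H_d)·Π_S = 0 satisfies H_d = Γ₁ + H̃_d·Γ₂, where H̃_d ∈ ℝ^{p×r} denotes the matrix of the first r columns of H_d. -/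
open Matrix

lemma submatrix_mul_right {m n k l : Type*} [Fintype n] (A : Matrix m n ℝ)
    (B : Matrix n k ℝ) (f : l → k) :
    (A * B).submatrix id f = A * B.submatrix id f := by
  ext i j
  simp [Matrix.mul_apply]

/-- 'only if' direction of Proposition 2, consistency parameterization.
Every disturbance data matrix `H_d` consistent with `H_y` and `S`
(i.e. `(H_y - H_d) Π_S = 0`) is determined by its first `r` columns `H̃_d`
via `H_d = Γ₁ + H̃_d Γ₂`, where `Γ₂ = S̃⁻¹ S` and
`Γ₁ = H_y Π_S - H̃^LS Γ₂` with `H̃^LS` the first `r` columns of `H_y Π_S`. -/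
theorem consistency_parameterization_only_if
    (r T p : ℕ) (hT : r ≤ T)
    (S : Matrix (Fin r) (Fin T) ℝ) (hS : IsUnit (S * Sᵀ))
    (St : Matrix (Fin r) (Fin r) ℝ) (hSt : St = S.submatrix id (Fin.castLE hT))
    (hStInv : IsUnit St)
    (Hy : Matrix (Fin p) (Fin T) ℝ)
    (PiS : Matrix (Fin T) (Fin T) ℝ) (hPiS : PiS = 1 - Sᵀ * (S * Sᵀ)⁻¹ * S)
    (Γ₂ : Matrix (Fin r) (Fin T) ℝ) (hΓ₂ : Γ₂ = St⁻¹ * S)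
    (HLS : Matrix (Fin p) (Fin r) ℝ) (hHLS : HLS = (Hy * PiS).submatrix id (Fin.castLE hT))
    (Γ₁ : Matrix (Fin p) (Fin T) ℝ) (hΓ₁ : Γ₁ = Hy * PiS - HLS * Γ₂)
    (Hd : Matrix (Fin p) (Fin T) ℝ)
    (hcons : (Hy - Hd) * PiS = 0) :
    Hd = Γ₁ + (Hd.submatrix id (Fin.castLE hT)) * Γ₂ := by
  have hdet : IsUnit St.det := (Matrix.isUnit_iff_isUnit_det St).mp hStInv
  have hStS : St * Γ₂ = S := by
    rw [hΓ₂, ← Matrix.mul_assoc, Matrix.mul_nonsing_inv St hdet, Matrix.one_mul]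
  have hΓ₂sub : Γ₂.submatrix id (Fin.castLE hT) = 1 := by
    rw [hΓ₂, submatrix_mul_right, ← hSt, Matrix.nonsing_inv_mul St hdet]
  -- Hd * PiS = Hy * PiS
  have hP : Hd * PiS = Hy * PiS := by
    have := sub_eq_zero.mpr (rfl : (Hy - Hd) * PiS = (Hy - Hd) * PiS)
    have h := hcons
    rw [Matrix.sub_mul, sub_eq_zero] at h
    exact h.symm
  set K : Matrix (Fin p) (Fin r) ℝ := Hd * Sᵀ * (S * Sᵀ)⁻¹ with hK
  have hdecomp : Hd = Hy * PiS + K * St * Γ₂ := by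
    rw [Matrix.mul_assoc, hStS, ← hP, hPiS]
    rw [Matrix.mul_sub, Matrix.mul_one, hK]
    rw [Matrix.mul_assoc, Matrix.mul_assoc, Matrix.mul_assoc]
    abel
  have hsub : Hd.submatrix id (Fin.castLE hT) = HLS + K * St := by
    rw [hdecomp]
    have h1 : ((Hy * PiS + K * St * Γ₂).submatrix id (Fin.castLE hT) : Matrix (Fin p) (Fin r) ℝ)
        = (Hy * PiS).submatrix id (Fin.castLE hT) + (K * St * Γ₂).submatrix id (Fin.castLE hT) := by
      ext i j; simp
    rw [h1, ← hHLS, submatrix_mul_right (K * St) Γ₂ (Fin.castLE hT), hΓ₂sub, Matrix.mul_one]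
  calc Hd = Hy * PiS + K * St * Γ₂ := hdecomp
    _ = (Hy * PiS - HLS * Γ₂) + (HLS + K * St) * Γ₂ := by
        rw [Matrix.add_mul]; abel
    _ = Γ₁ + (Hd.submatrix id (Fin.castLE hT)) * Γ₂ := by rw [hΓ₁, hsub]
end

section
/- Let n, m, q ∈ ℕ and N ≥ 1. Let (A_j, B_j) ∈ ℝ^{n×n} × ℝ^{n×m} for j = 1,…,N_v be a finite family of matrix vertices, E ∈ ℝ^{n×q}, 𝔻 ⊆ ℝ^q, Ξ ⊆ ℝⁿ a convex set, and C ⊆ ℝⁿ × ℝ^{mN} an arbitrary set. For v ∈ ℝ^{mN} write v₀ ∈ ℝᵐ for its first m entries. Define C_R := { (ξ, v) : for all d ∈ 𝔻 and all j ∈ {1,…,N_v}, A_j ξ + B_j v₀ + E d ∈ Ξ } and F(ξ) := { v ∈ ℝ^{mN} : (ξ, v) ∈ C ∩ C_R }. Assume Ξ ⊆ { ξ ∈ ℝⁿ : F(ξ) ≠ ∅ }. Then for every ξ ∈ ℝⁿ with F(ξ) ≠ ∅, every v ∈ F(ξ), every pair (A, B) in the convex hull of {(A_j, B_j) : j = 1,…,N_v}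 (as a subset of ℝ^{n×n} × ℝ^{n×m}), and every d ∈ 𝔻, the successor state ξ⁺ := A ξ + B v₀ + E d satisfies F(ξ⁺) ≠ ∅. -/
open Matrix

/-- Theorem 1 of the paper, recursive feasibility, set-theoretic form.
With the robust first-step constraint `C_R` forcing the successor state into the
convex set `Ξ` for all vertices and disturbances, and `Ξ` contained in the feasible
domain `{ξ : F(ξ) ≠ ∅}`, feasibility propagates to the successor state
`ξ⁺ = A ξ + B v₀ + E d` for any `(A,B)` in the convex hull of the vertices and
any `d ∈ 𝔻`. -/
theorem recursive_feasibility
    (n m q N Nv : ℕ) (hN : 0 < N)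
    (A : Fin Nv → Matrix (Fin n) (Fin n) ℝ) (B : Fin Nv → Matrix (Fin n) (Fin m) ℝ)
    (E : Matrix (Fin n) (Fin q) ℝ) (D : Set (Fin q → ℝ))
    (Ξ : Set (Fin n → ℝ)) (hΞ : Convex ℝ Ξ)
    (C : Set ((Fin n → ℝ) × (Fin (m * N) → ℝ)))
    (v0 : (Fin (m * N) → ℝ) → (Fin m → ℝ))
    (hv0 : ∀ v i, v0 v i = v (Fin.castLE (Nat.le_mul_of_pos_right m hN) i))
    (CR : Set ((Fin n → ℝ) × (Fin (m * N) → ℝ)))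
    (hCR : CR = {pv | ∀ d ∈ D, ∀ j : Fin Nv,
      (A j).mulVec pv.1 + (B j).mulVec (v0 pv.2) + E.mulVec d ∈ Ξ})
    (F : (Fin n → ℝ) → Set (Fin (m * N) → ℝ))
    (hF : ∀ ξ, F ξ = {v | (ξ, v) ∈ C ∩ CR})
    (hInv : Ξ ⊆ {ξ | (F ξ).Nonempty}) :
    ∀ ξ : Fin n → ℝ, (F ξ).Nonempty → ∀ v ∈ F ξ,
      ∀ AB ∈ convexHull ℝ (Set.range fun j => (A j, B j)),
      ∀ d ∈ D,
        (F (AB.1.mulVec ξ + AB.2.mulVec (v0 v) + E.mulVec d)).Nonempty := by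
  intro ξ _ v hv AB hAB d hd
  apply hInv
  have hvCR : (ξ, v) ∈ CR := ((hF ξ ▸ hv : v ∈ {v | (ξ, v) ∈ C ∩ CR})).2
  rw [hCR] at hvCR
  have hS : convexHull ℝ (Set.range fun j => (A j, B j)) ⊆
      {P : Matrix (Fin n) (Fin n) ℝ × Matrix (Fin n) (Fin m) ℝ |
        P.1.mulVec ξ + P.2.mulVec (v0 v) + E.mulVec d ∈ Ξ} := by
    apply convexHull_min
    · rintro _ ⟨j, rfl⟩
      exact hvCR d hd j
    · rintro ⟨A1, B1⟩ h1 ⟨A2, B2⟩ h2 a b ha hb hab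
      simp only [Set.mem_setOf_eq] at h1 h2 ⊢
      have : (a • A1 + b • A2).mulVec ξ + (a • B1 + b • B2).mulVec (v0 v) + E.mulVec d
          = a • (A1.mulVec ξ + B1.mulVec (v0 v) + E.mulVec d)
            + b • (A2.mulVec ξ + B2.mulVec (v0 v) + E.mulVec d) := by
        have hE : E.mulVec d = a • E.mulVec d + b • E.mulVec d := by
          rw [← add_smul, hab, one_smul]
        conv_lhs => rw [hE]
        simp only [Matrix.add_mulVec, Matrix.smul_mulVec, smul_add]
        abel
      exact this ▸ hΞ h1 h2 ha hb hab
  exact hS hAB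
end

section
/- Let n, m, q ∈ ℕ and N ≥ 1. Let (A_j, B_j) ∈ ℝ^{n×n} × ℝ^{n×m} for j = 1,…,N_v, E ∈ ℝ^{n×q}, 𝔻 ⊆ ℝ^q, Ξ ⊆ ℝⁿ convex, C ⊆ ℝⁿ × ℝ^{mN}, and define C_R := { (ξ, v) : ∀ d ∈ 𝔻, ∀ j, A_j ξ + B_j v₀ + E d ∈ Ξ } and F(ξ) := { v : (ξ, v) ∈ C ∩ C_R }, where v₀ denotes the first m entries of v. Assume Ξ ⊆ { ξ : F(ξ) ≠ ∅ }. In addition, let K ∈ ℝ^{m×n}, 𝕌 ⊆ ℝᵐ, and assume C ⊆ { (ξ, v) : K ξ + v₀ ∈ 𝕌 }. Fix any (A, B) in the convex hull of {(A_j, B_j)}. Then for every ξ₀ ∈ ℝⁿ with F(ξ₀) ≠ ∅, every disturbance sequence d : ℕ → 𝔻, every k ∈ ℕ, and every pair of finite sequences ξ(0),…,ξ(k) ∈ ℝⁿ and v(0),…,v(k−1) ∈ ℝ^{mN} satisfying ξ(0) = ξ₀, v(i) ∈ F(ξ(i)) and ξ(i+1) = A ξ(i) + B v(i)₀ + E d(i)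 for all i < k, it holds that F(ξ(k)) ≠ ∅; moreover, K ξ(i) + v(i)₀ ∈ 𝕌 for all i < k. -/
open Matrix

private lemma convex_step {n m : ℕ} {Nv : ℕ}
    (A : Fin Nv → Matrix (Fin n) (Fin n) ℝ) (B : Fin Nv → Matrix (Fin n) (Fin m) ℝ)
    (Ξ : Set (Fin n → ℝ)) (hΞ : Convex ℝ Ξ)
    (AB : Matrix (Fin n) (Fin n) ℝ × Matrix (Fin n) (Fin m) ℝ)
    (hAB : AB ∈ convexHull ℝ (Set.range fun j => (A j, B j)))
    (ξ : Fin n → ℝ) (w : Fin m → ℝ) (c : Fin n → ℝ)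
    (hvert : ∀ j : Fin Nv, (A j).mulVec ξ + (B j).mulVec w + c ∈ Ξ) :
    AB.1.mulVec ξ + AB.2.mulVec w + c ∈ Ξ := by
  set L : (Matrix (Fin n) (Fin n) ℝ × Matrix (Fin n) (Fin m) ℝ) →ₗ[ℝ] (Fin n → ℝ) :=
    { toFun := fun p => p.1.mulVec ξ + p.2.mulVec w
      map_add' := by
        intro p q
        simp [Matrix.add_mulVec]
        abel
      map_smul' := by
        intro r p
        simp [Matrix.smul_mulVec, smul_add] }
  have hS : Convex ℝ {x : Fin n → ℝ | x + c ∈ Ξ} := by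
    intro x hx y hy a b ha hb hab
    have hmem := hΞ hx hy ha hb hab
    have heq : a • (x + c) + b • (y + c) = (a • x + b • y) + c := by
      rw [smul_add, smul_add,
        show a • x + a • c + (b • y + b • c) = a • x + b • y + (a • c + b • c) by abel,
        ← add_smul, hab, one_smul]
    show (a • x + b • y) + c ∈ Ξ
    rw [← heq]; exact hmem
  have hmem : L AB ∈ L '' (convexHull ℝ (Set.range fun j => (A j, B j))) :=
    ⟨AB, hAB, rfl⟩
  rw [L.image_convexHull] at hmem
  have hsub : convexHull ℝ (L '' Set.range fun j => (A j, B j)) ⊆ {x | x + c ∈ Ξ} := by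
    apply convexHull_min _ hS
    rintro x ⟨p, ⟨j, rfl⟩, rfl⟩
    exact hvert j
  exact hsub hmem

/-- closed-loop consequence of Theorem 1 and the deterministic part
of the corollary on closed-loop constraint satisfaction. Along every closed-loop
trajectory generated by `ξ(i+1) = A ξ(i) + B v(i)₀ + E d(i)` with `v(i) ∈ F(ξ(i))`,
`(A,B)` in the convex hull of the vertices and `d(i) ∈ 𝔻`, the feasible set remains
nonempty and the applied inputs `K ξ(i) + v(i)₀` satisfy the hard input constraint. -/
theorem closed_loop_recursive_feasibility_and_input_constraints
    (n m q N Nv : ℕ) (hN : 0 < N)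
    (A : Fin Nv → Matrix (Fin n) (Fin n) ℝ) (B : Fin Nv → Matrix (Fin n) (Fin m) ℝ)
    (E : Matrix (Fin n) (Fin q) ℝ) (D : Set (Fin q → ℝ))
    (Ξ : Set (Fin n → ℝ)) (hΞ : Convex ℝ Ξ)
    (C : Set ((Fin n → ℝ) × (Fin (m * N) → ℝ)))
    (v0 : (Fin (m * N) → ℝ) → (Fin m → ℝ))
    (hv0 : ∀ v i, v0 v i = v (Fin.castLE (Nat.le_mul_of_pos_right m hN) i))
    (CR : Set ((Fin n → ℝ) × (Fin (m * N) → ℝ)))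
    (hCR : CR = {pv | ∀ d ∈ D, ∀ j : Fin Nv,
      (A j).mulVec pv.1 + (B j).mulVec (v0 pv.2) + E.mulVec d ∈ Ξ})
    (F : (Fin n → ℝ) → Set (Fin (m * N) → ℝ))
    (hF : ∀ ξ, F ξ = {v | (ξ, v) ∈ C ∩ CR})
    (hInv : Ξ ⊆ {ξ | (F ξ).Nonempty})
    (K : Matrix (Fin m) (Fin n) ℝ) (U : Set (Fin m → ℝ))
    (hC : C ⊆ {pv | K.mulVec pv.1 + v0 pv.2 ∈ U})
    (AB : Matrix (Fin n) (Fin n) ℝ × Matrix (Fin n) (Fin m) ℝ)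
    (hAB : AB ∈ convexHull ℝ (Set.range fun j => (A j, B j))) :
    ∀ ξ0 : Fin n → ℝ, (F ξ0).Nonempty →
    ∀ d : ℕ → (Fin q → ℝ), (∀ i, d i ∈ D) →
    ∀ k : ℕ, ∀ ξ : ℕ → (Fin n → ℝ), ∀ v : ℕ → (Fin (m * N) → ℝ),
      ξ 0 = ξ0 →
      (∀ i < k, v i ∈ F (ξ i)) →
      (∀ i < k, ξ (i + 1) = AB.1.mulVec (ξ i) + AB.2.mulVec (v0 (v i)) + E.mulVec (d i)) →
      (F (ξ k)).Nonempty ∧ ∀ i < k, K.mulVec (ξ i) + v0 (v i) ∈ U := by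
  intro ξ0 hξ0 d hd k
  induction k with
  | zero =>
    intro ξ v h0 _ _
    exact ⟨h0 ▸ hξ0, fun i hi => absurd hi (Nat.not_lt_zero i)⟩
  | succ k ih =>
    intro ξ v h0 hv hξ
    have hv' : ∀ i < k, v i ∈ F (ξ i) := fun i hi => hv i (hi.trans (Nat.lt_succ_self k))
    have hξ' : ∀ i < k, ξ (i + 1) = AB.1.mulVec (ξ i) + AB.2.mulVec (v0 (v i)) + E.mulVec (d i) :=
      fun i hi => hξ i (hi.trans (Nat.lt_succ_self k))
    obtain ⟨hFk, hUk⟩ := ih ξ v h0 hv' hξ'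
    have hvk : v k ∈ F (ξ k) := hv k (Nat.lt_succ_self k)
    rw [hF] at hvk
    obtain ⟨hvkC, hvkCR⟩ := hvk
    rw [hCR] at hvkCR
    have hvert := hvkCR (d k) (hd k)
    have hnext : ξ (k + 1) ∈ Ξ := by
      rw [hξ k (Nat.lt_succ_self k)]
      exact convex_step A B Ξ hΞ AB hAB _ _ _ hvert
    refine ⟨hInv hnext, fun i hi => ?_⟩
    rcases Nat.lt_succ_iff_lt_or_eq.mp hi with h | h
    · exact hUk i h
    · subst h; exact hC hvkC
end

section
/- Consider the discrete-time LTI system x_{k+1} = A x_k + B u_k, y_k = C x_k + D u_k with A ∈ ℝ^{n×n}, B ∈ ℝ^{n×m}, C ∈ ℝ^{p×n}, D ∈ ℝ^{p×m}, where (A, B) is controllable. Let T_ini ≥ ℓ, where ℓ is the lag of the system, and let N ≥ 1, T ≥ T_ini + N. Let (u^d_i, y^d_i) for i = −T_ini+1, …, T be an input–output trajectory of the system, i.e., there exists a state sequence (x^d_i) with x^d_{i+1} = A x^d_i + B u^d_i and y^d_i = C x^d_i + D u^d_i over this index range; let ξ^d_i for i = 1, …, T be the corresponding extended states. Assume the sequence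 (u^d_1, …, u^d_T) is persistently exciting of order n + T_ini + N. Then, for any k ≥ 0, a pair of sequences u_{k−T_ini}, …, u_{k+N−1} ∈ ℝᵐ and y_{k−T_ini}, …, y_{k+N−1} ∈ ℝᵖ is a trajectory of the system (i.e., there exist states x_i with x_{i+1} = A x_i + B u_i and y_i = C x_i + D u_i for i = k−T_ini, …, k+N−1) if and only if there exists α ∈ ℝ^{T−N+1} such that the stacked vector col(ξ_k, u_k, …, u_{k+N−1}, y_k, …, y_{k+N−1}) equals the stacked matrix col(H₁(ξ^d_1, …, ξ^d_{T−N+1}), H_N(u^d_1, …, u^d_T), H_N(y^d_1, …, y^d_T)) times α, where ξ_k is the extended state built from u_{k−T_ini}, …, u_{k−1} and y_{k−T_ini}, …, y_{k−1}. -/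
open Matrix

/-- Hankel matrix of order `L` built from the (1-indexed) data `s 1, …, s T`
of vectors in `ℝ^ι`: block entry at block position `(i, j)` (1-indexed) is
`s (i + j - 1)`. It has `L` block rows and `T - L + 1` block columns. -/
def hankel (ι : Type*) (L T : ℕ) (s : ℤ → ι → ℝ) :
    Matrix (Fin L × ι) (Fin (T - L + 1)) ℝ :=
  fun q j => s ((q.1 : ℕ) + (j : ℕ) + 1) q.2

/-- A (1-indexed) sequence `s 1, …, s T` of vectors in `ℝ^ι` is persistently
exciting of order `L` if its Hankel matrix of order `L` has full row rank. -/
def PersistentlyExciting (ι : Type*) [Fintype ι] [DecidableEq ι]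
    (L T : ℕ) (s : ℤ → ι → ℝ) : Prop :=
  (hankel ι L T s).rank = Fintype.card (Fin L × ι)

/-- The extended state `ξ_k = col(u_{k-T_ini}, …, u_{k-1}, y_{k-T_ini}, …, y_{k-1})`
of input/output sequences `u`, `y`, as a vector in `ℝ^{(m+p)·T_ini}`. -/
def extState (m p Tini : ℕ) (u : ℤ → Fin m → ℝ) (y : ℤ → Fin p → ℝ) (k : ℤ) :
    (Fin Tini × Fin m) ⊕ (Fin Tini × Fin p) → ℝ :=
  Sum.elim (fun q => u (k - (Tini : ℤ) + (q.1 : ℕ)) q.2)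
    (fun q => y (k - (Tini : ℤ) + (q.1 : ℕ)) q.2)

/-- Controllability matrix `[B, AB, …, A^{n-1}B]`. -/
def ctrbMat (n m : ℕ) (A : Matrix (Fin n) (Fin n) ℝ) (B : Matrix (Fin n) (Fin m) ℝ) :
    Matrix (Fin n) (Fin n × Fin m) ℝ :=
  fun i q => (A ^ (q.1 : ℕ) * B) i q.2

/-- Observability matrix `col(C, CA, …, CA^{j-1})` of order `j`. -/
def obsMat (n p : ℕ) (A : Matrix (Fin n) (Fin n) ℝ) (C : Matrix (Fin p) (Fin n) ℝ)
    (j : ℕ) : Matrix (Fin j × Fin p) (Fin n) ℝ :=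
  fun q c => (C * A ^ (q.1 : ℕ)) q.2 c

/-! The substance is the state–input form of Willems' lemma: if `(A, B)` is controllable and
`u^d` is persistently exciting of order `n + L`, then `col(X^d, H_L(u^d))` has full row rank.
Take `(ξ, η)` in its left kernel. Substituting `x_{j+1} = A x_j + B u_j` once turns the relation
`ξ x_j + η · (u_j, …, u_{j+L-1}) = 0` into one for `(ξ A, (ξ B, η))`; doing this `s ≤ n` times and
summing with the coefficients of the characteristic polynomial of `A` eliminates the states by
Cayley–Hamilton and leaves a vector in the left kernel of `H_{n+L}(u^d)`, which vanishes. As the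
characteristic polynomial is monic, this forces `η = 0` and `ξ A^s B = 0` for `s < n`, so `ξ = 0`.

Full row rank lets us match the initial state `x_{k-T_ini}` and the inputs of any trajectory on the
window by a combination `∑ α_j` of shifted data trajectories; by linearity and time invariance that
combination is itself a trajectory, so uniqueness of the output given initial state and inputs
gives the outputs too. Conversely every combination of data windows is a trajectory. -/

open Finset Polynomial

theorem Matrix.linearIndependent_row_of_rank_eq {m n K : Type*} [Fintype m] [Fintype n] [Field K]
    {M : Matrix m n K} (h : M.rank = Fintype.card m) : LinearIndependent K M.row := by
  rw [linearIndependent_iff_card_eq_finrank_span, ← h, M.rank_eq_finrank_span_row]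
  rfl

theorem Matrix.mulVec_surjective_of_linearIndependent_row {m n K : Type*} [Fintype m] [Fintype n]
    [Field K] {M : Matrix m n K} (h : LinearIndependent K M.row) : Function.Surjective M.mulVec :=
  LinearMap.range_eq_top.mp <|
    Submodule.eq_top_of_finrank_eq (S := LinearMap.range M.mulVecLin) <| by
      rw [Module.finrank_fintype_fun_eq_card, ← h.rank_matrix]
      rfl

theorem Polynomial.Monic.eq_zero_of_forall_sum_coeff_smul_eq_zero {R V : Type*} [Semiring R]
    [AddCommMonoid V] [Module R V] {p : R[X]} (hp : p.Monic) {g : ℕ → V} {M : ℕ}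
    (hg : ∀ i, M ≤ i → g i = 0)
    (h : ∀ t < M, ∑ s ∈ range (p.natDegree + 1), p.coeff s • g (t + (p.natDegree - s)) = 0) :
    g = 0 := by
  suffices ∀ r t, M ≤ t + r → g t = 0 from _root_.funext fun t => this M t (by omega)
  intro r
  induction r with
  | zero => exact fun t ht => hg t ht
  | succ r ih =>
    intro t ht
    by_cases htr : M ≤ t + r
    · exact ih t htr
    have := h t (by omega)
    rwa [sum_range_succ, hp.coeff_natDegree, Nat.sub_self, add_zero, one_smul,
      sum_eq_zero fun s hs => by rw [ih _ (by simp at hs; omega), smul_zero], zero_add] at this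

section StateInputWindows

variable {n m : ℕ} {A : Matrix (Fin n) (Fin n) ℝ} {B : Matrix (Fin n) (Fin m) ℝ}
  {x : ℕ → Fin n → ℝ} {u : ℕ → Fin m → ℝ}

theorem window_relation_shift {J R : ℕ} (hx : ∀ j < J, x (j + 1) = A *ᵥ x j + B *ᵥ u j)
    {ζ : Fin n → ℝ} {w : ℕ → Fin m → ℝ} (hw₀ : w 0 = ζ ᵥ* B)
    (h : ∀ j < J + 1, ζ ⬝ᵥ x j + ∑ t ∈ range R, w (t + 1) ⬝ᵥ u (j + t) = 0) :
    ∀ j < J, (ζ ᵥ* A) ⬝ᵥ x j + ∑ t ∈ range (R + 1), w t ⬝ᵥ u (j + t) = 0 := by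
  intro j hj
  have := h (j + 1) (by omega)
  rw [hx j hj, dotProduct_add, dotProduct_mulVec, dotProduct_mulVec, ← hw₀] at this
  rw [sum_range_succ', add_zero]
  simp only [← add_assoc, add_right_comm j _ 1] at this ⊢
  linear_combination this

theorem window_relation_iterate {K d L : ℕ}
    (hx : ∀ j, j + 1 < K + d → x (j + 1) = A *ᵥ x j + B *ᵥ u j)
    {ξ : Fin n → ℝ} {g : ℕ → Fin m → ℝ} (hg : ∀ s < d, g (d - 1 - s) = ξ ᵥ* (A ^ s * B))
    (h : ∀ j < K + d, ξ ⬝ᵥ x j + ∑ t ∈ range L, g (t + d) ⬝ᵥ u (j + t) = 0) :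
    ∀ s ≤ d, ∀ j < K + (d - s),
      (ξ ᵥ* A ^ s) ⬝ᵥ x j + ∑ t ∈ range (s + L), g (t + (d - s)) ⬝ᵥ u (j + t) = 0 := by
  intro s
  induction s with
  | zero => simpa using h
  | succ s ih =>
    intro hs
    have step := window_relation_shift (J := K + (d - (s + 1))) (R := s + L) (ζ := ξ ᵥ* A ^ s)
      (w := fun t => g (t + (d - (s + 1)))) (fun j hj => hx j (by omega))
      (by rw [zero_add, Matrix.vecMul_vecMul, ← hg s hs]; congr 1; omega)
      (fun j hj => by
        convert ih (by omega) j (by omega) using 4 with t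
        congr 1; omega)
    rw [pow_succ, ← Matrix.vecMul_vecMul, add_right_comm]
    exact step

theorem sum_window_eq_zero_of_aeval_eq_zero {p : ℝ[X]} (hp : aeval A p = 0) {L : ℕ}
    {ξ : Fin n → ℝ} {g : ℕ → Fin m → ℝ} (hg : ∀ i, p.natDegree + L ≤ i → g i = 0)
    {z : Fin n → ℝ} {v : ℕ → Fin m → ℝ}
    (h : ∀ s ≤ p.natDegree,
      (ξ ᵥ* A ^ s) ⬝ᵥ z + ∑ t ∈ range (s + L), g (t + (p.natDegree - s)) ⬝ᵥ v t = 0) :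
    ∑ t ∈ range (p.natDegree + L),
      (∑ s ∈ range (p.natDegree + 1), p.coeff s • g (t + (p.natDegree - s))) ⬝ᵥ v t = 0 := by
  set d := p.natDegree
  have hrange : ∀ s ∈ range (d + 1), ∑ t ∈ range (d + L), g (t + (d - s)) ⬝ᵥ v t =
      -((ξ ᵥ* A ^ s) ⬝ᵥ z) := by
    intro s hs
    rw [mem_range] at hs
    rw [eq_neg_iff_add_eq_zero, add_comm, ← h s (by omega)]
    congr 1
    refine (sum_subset (range_subset_range.mpr (by omega)) fun t ht ht' => ?_).symm
    simp only [mem_range, not_lt] at ht ht'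
    rw [hg _ (by omega), zero_dotProduct]
  calc ∑ t ∈ range (d + L), (∑ s ∈ range (d + 1), p.coeff s • g (t + (d - s))) ⬝ᵥ v t
      = ∑ s ∈ range (d + 1), p.coeff s * ∑ t ∈ range (d + L), g (t + (d - s)) ⬝ᵥ v t := by
        simp only [sum_dotProduct, smul_dotProduct, smul_eq_mul, mul_sum]
        exact sum_comm
    _ = -((ξ ᵥ* aeval A p) ⬝ᵥ z) := by
        simp only [sum_congr rfl fun s hs => congrArg (p.coeff s * ·) (hrange s hs),
          aeval_eq_sum_range, Matrix.vecMul_sum, Matrix.vecMul_smul, sum_dotProduct,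
          smul_dotProduct, smul_eq_mul, mul_neg, sum_neg_distrib]
        rfl
    _ = 0 := by rw [hp, Matrix.vecMul_zero, zero_dotProduct, neg_zero]

theorem eq_zero_of_forall_state_input_window_eq_zero (hctrb : (ctrbMat n m A B).rank = n)
    {K L : ℕ} (hx : ∀ j, j + 1 < K + n → x (j + 1) = A *ᵥ x j + B *ᵥ u j)
    (hPE : ∀ w : ℕ → Fin m → ℝ,
      (∀ j < K, ∑ t ∈ range (n + L), w t ⬝ᵥ u (j + t) = 0) → ∀ t < n + L, w t = 0)
    {ξ : Fin n → ℝ} {η : ℕ → Fin m → ℝ}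
    (h : ∀ j < K + n, ξ ⬝ᵥ x j + ∑ t ∈ range L, η t ⬝ᵥ u (j + t) = 0) :
    ξ = 0 ∧ ∀ t < L, η t = 0 := by
  -- `g = (ξ A^{n-1} B, …, ξ B, η₀, …, η_{L-1}, 0, …)`: after `s` substitutions of the state
  -- recursion the input weights of the relation are `t ↦ g (t + (n - s))`.
  set g : ℕ → Fin m → ℝ := fun i =>
    if i < n then ξ ᵥ* (A ^ (n - 1 - i) * B) else if i < n + L then η (i - n) else 0 with hg
  have hdeg : A.charpoly.natDegree = n := by simp [Matrix.charpoly_natDegree_eq_dim]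
  have hsupp : ∀ i, A.charpoly.natDegree + L ≤ i → g i = 0 := by
    intro i hi
    simp only [hg]
    rw [if_neg (by omega), if_neg (by omega)]
  have hstage := window_relation_iterate hx (g := g)
    (fun s hs => by simp only [hg]; rw [if_pos (by omega)]; congr 3; omega)
    (fun j hj => by
      convert h j hj using 3 with t ht
      simp only [hg, mem_range] at ht ⊢
      rw [if_neg (by omega), if_pos (by omega), Nat.add_sub_cancel])
  have hw : ∀ t < n + L, ∑ s ∈ range (n + 1), A.charpoly.coeff s • g (t + (n - s)) = 0 := by
    refine hPE _ fun j hj => ?_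
    have := sum_window_eq_zero_of_aeval_eq_zero (Matrix.aeval_self_charpoly A) hsupp
      (z := x j) (v := fun t => u (j + t))
      (fun s hs => by rw [hdeg] at hs ⊢; exact hstage s hs j (by omega))
    rwa [hdeg] at this
  have hg0 : g = 0 := Polynomial.Monic.eq_zero_of_forall_sum_coeff_smul_eq_zero
    (Matrix.charpoly_monic A) hsupp (by rwa [hdeg])
  constructor
  · have hctrb0 : ξ ᵥ* ctrbMat n m A B = 0 := by
      ext ⟨s, a⟩
      have := congrFun (congrFun hg0 (n - 1 - s)) a
      simp only [hg] at this
      rw [if_pos (by omega), show n - 1 - (n - 1 - s) = (s : ℕ) by omega] at this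
      exact this
    exact (Matrix.vecMul_injective_iff.mpr (Matrix.linearIndependent_row_of_rank_eq
      (by simpa using hctrb))) (hctrb0.trans (Matrix.zero_vecMul _).symm)
  · intro t ht
    simpa [hg, ht] using congrFun hg0 (n + t)

end StateInputWindows

theorem PersistentlyExciting.eq_zero_of_forall_window {m M T : ℕ} {u : ℤ → Fin m → ℝ}
    (hPE : PersistentlyExciting (Fin m) M T u) {w : ℕ → Fin m → ℝ}
    (hw : ∀ j < T - M + 1, ∑ t ∈ range M, w t ⬝ᵥ u (↑(j + t) + 1) = 0) :
    ∀ t < M, w t = 0 := by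
  have hinj := Matrix.vecMul_injective_iff.mpr (Matrix.linearIndependent_row_of_rank_eq hPE)
  have hzero : (fun q : Fin M × Fin m => w q.1 q.2) = 0 := hinj <| by
    ext j
    dsimp only
    rw [Matrix.zero_vecMul, Pi.zero_apply, ← hw j j.isLt, ← Fin.sum_univ_eq_sum_range]
    simp only [Matrix.vecMul, dotProduct, hankel, Fintype.sum_prod_type]
    push_cast
    simp only [add_comm ((j : ℕ) : ℤ)]
  intro t ht
  ext a
  exact congrFun hzero (⟨t, ht⟩, a)

theorem PersistentlyExciting.add_le {n m L T : ℕ} {A : Matrix (Fin n) (Fin n) ℝ}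
    {B : Matrix (Fin n) (Fin m) ℝ} (hctrb : (ctrbMat n m A B).rank = n) {u : ℤ → Fin m → ℝ}
    (hPE : PersistentlyExciting (Fin m) (n + L) T u) (hL : 1 ≤ L) (hLT : L ≤ T) :
    n + L ≤ T := by
  have hn := (ctrbMat n m A B).rank_le_card_width
  have hH := (hankel (Fin m) (n + L) T u).rank_le_card_width
  rw [hctrb, Fintype.card_prod, Fintype.card_fin, Fintype.card_fin] at hn
  rw [hPE, Fintype.card_prod, Fintype.card_fin, Fintype.card_fin, Fintype.card_fin] at hH
  rcases Nat.eq_zero_or_pos m with rfl | hm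
  · omega
  · have := Nat.le_mul_of_pos_right (n + L) hm
    omega

/-- `col(H₁(x), H_L(u))` with `K` columns, the first one at time `c`. -/
def stateInputHankel {n m : ℕ} (x : ℤ → Fin n → ℝ) (u : ℤ → Fin m → ℝ) (c : ℤ) (L K : ℕ) :
    Matrix (Fin n ⊕ Fin L × Fin m) (Fin K) ℝ :=
  Matrix.fromRows (Matrix.of fun a j => x (c + j) a) (Matrix.of fun q j => u (c + j + q.1) q.2)

theorem linearIndependent_row_stateInputHankel {n m L T e K : ℕ}
    {A : Matrix (Fin n) (Fin n) ℝ} {B : Matrix (Fin n) (Fin m) ℝ}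
    (hctrb : (ctrbMat n m A B).rank = n) {x : ℤ → Fin n → ℝ} {u : ℤ → Fin m → ℝ}
    (hx : ∀ i : ℤ, 1 ≤ i → i ≤ T - L → x (i + 1) = A *ᵥ x i + B *ᵥ u i)
    (hPE : PersistentlyExciting (Fin m) (n + L) T u) (hnLT : n + L ≤ T) (hK : T - L + 1 + e ≤ K) :
    LinearIndependent ℝ (stateInputHankel x u (1 - e) L K).row := by
  rw [← Matrix.vecMul_injective_iff, ← Matrix.coe_vecMulLinear, injective_iff_map_eq_zero]
  intro v hv
  set η : ℕ → Fin m → ℝ := Function.extend Fin.val (Function.curry (v ∘ Sum.inr)) 0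
  have hη : ∀ t : Fin L, η t = fun a => v (Sum.inr (t, a)) :=
    fun t => Fin.val_injective.extend_apply _ _ t
  obtain ⟨hξ, hη0⟩ := eq_zero_of_forall_state_input_window_eq_zero hctrb
    (x := fun j => x (j + 1)) (u := fun j => u (j + 1)) (K := T - (n + L) + 1) (ξ := v ∘ Sum.inl)
    (η := η) (fun j hj => by push_cast; exact hx (j + 1) (by omega) (by omega))
    (fun w hw => hPE.eq_zero_of_forall_window hw)
    (fun j hj => by
      have := congrFun hv ⟨j + e, by omega⟩
      rw [← Fin.sum_univ_eq_sum_range (fun t => η t ⬝ᵥ u (↑(j + t) + 1))]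
      simp only [Matrix.coe_vecMulLinear, stateInputHankel, Matrix.vecMul_fromRows, Pi.add_apply,
        Pi.zero_apply] at this
      rw [← this]
      simp only [hη, Matrix.vecMul, dotProduct, Matrix.of_apply, Fintype.sum_prod_type,
        Function.comp_apply]
      push_cast
      simp only [show (1 : ℤ) - e + (j + e) = j + 1 by ring, add_right_comm (j : ℤ) 1])
  ext (a | ⟨t, a⟩)
  · exact congrFun hξ a
  · simpa [hη] using congrFun (hη0 t t.isLt) a

def IsTrajectory {n m p : ℕ} (A : Matrix (Fin n) (Fin n) ℝ) (B : Matrix (Fin n) (Fin m) ℝ)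
    (C : Matrix (Fin p) (Fin n) ℝ) (D : Matrix (Fin p) (Fin m) ℝ) (a b : ℤ)
    (x : ℤ → Fin n → ℝ) (u : ℤ → Fin m → ℝ) (y : ℤ → Fin p → ℝ) : Prop :=
  ∀ i, a ≤ i → i ≤ b → x (i + 1) = A *ᵥ x i + B *ᵥ u i ∧ y i = C *ᵥ x i + D *ᵥ u i

/-- The combination of time-shifted data whose window at time `k` is the Hankel product `H α`. -/
def hankelComb {ι : Type*} {K : ℕ} (s : ℤ → ι → ℝ) (k : ℤ) (α : Fin K → ℝ) : ℤ → ι → ℝ :=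
  fun i => ∑ j, α j • s (i - k + j + 1)

namespace IsTrajectory

variable {n m p : ℕ} {A : Matrix (Fin n) (Fin n) ℝ} {B : Matrix (Fin n) (Fin m) ℝ}
  {C : Matrix (Fin p) (Fin n) ℝ} {D : Matrix (Fin p) (Fin m) ℝ}

theorem hankelComb {a' b' : ℤ} {xd : ℤ → Fin n → ℝ} {ud : ℤ → Fin m → ℝ} {yd : ℤ → Fin p → ℝ}
    (h : IsTrajectory A B C D a' b' xd ud yd) {K : ℕ} (α : Fin K → ℝ) {k a b : ℤ}
    (ha : a' ≤ a - k + 1) (hb : b - k + K ≤ b') :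
    IsTrajectory A B C D a b (hankelComb xd k α) (hankelComb ud k α) (hankelComb yd k α) := by
  intro i hi₁ hi₂
  have hj (j : Fin K) := h (i - k + j + 1) (by omega) (by have := j.isLt; omega)
  simp only [_root_.hankelComb, Matrix.mulVec_sum, Matrix.mulVec_smul, ← sum_add_distrib,
    ← smul_add]
  constructor
  · refine sum_congr rfl fun j _ => ?_
    rw [show i + 1 - k + j + 1 = i - k + j + 1 + 1 by ring, (hj j).1]
  · exact sum_congr rfl fun j _ => by rw [(hj j).2]

theorem output_eq {a b : ℤ} {x x' : ℤ → Fin n → ℝ} {u u' : ℤ → Fin m → ℝ}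
    {y y' : ℤ → Fin p → ℝ} (h : IsTrajectory A B C D a b x u y)
    (h' : IsTrajectory A B C D a b x' u' y') (hx : x a = x' a)
    (hu : ∀ i, a ≤ i → i ≤ b → u i = u' i) : ∀ i, a ≤ i → i ≤ b → y i = y' i := by
  have hstate : ∀ i, a ≤ i → i ≤ b → x i = x' i := by
    intro i hi
    induction i, hi using Int.leInduction with
    | base => exact fun _ => hx
    | succ i hi ih =>
      intro hib
      rw [(h i hi (by omega)).1, (h' i hi (by omega)).1, ih (by omega), hu i hi (by omega)]
  intro i hi₁ hi₂
  rw [(h i hi₁ hi₂).2, (h' i hi₁ hi₂).2, hstate i hi₁ hi₂, hu i hi₁ hi₂]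

end IsTrajectory

/-- The left side is the stacked Hankel equation of `willems_fundamental_lemma`, read row by
row for one of the signals. -/
theorem forall_window_eq_hankelComb_iff {ι : Type*} {K : ℕ} (s sd : ℤ → ι → ℝ)
    (α : Fin K → ℝ) (k : ℤ) (Tini N : ℕ) :
    ((∀ (t : Fin Tini) (a : ι),
        s (k - Tini + (t : ℕ)) a = ∑ j : Fin K, sd ((j : ℕ) + 1 - Tini + (t : ℕ)) a * α j) ∧
      ∀ (t : Fin N) (a : ι), s (k + (t : ℕ)) a = ∑ j : Fin K, sd ((t : ℕ) + (j : ℕ) + 1) a * α j) ↔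
    ∀ i, k - Tini ≤ i → i ≤ k + N - 1 → s i = hankelComb sd k α i := by
  have hcomb (i : ℤ) (a : ι) :
      hankelComb sd k α i a = ∑ j : Fin K, sd (i - k + (j : ℕ) + 1) a * α j := by
    simp [hankelComb, Finset.sum_apply, mul_comm]
  constructor
  · rintro ⟨hpast, hfut⟩ i hi₁ hi₂
    ext a
    rw [hcomb]
    rcases lt_or_ge i k with hik | hik
    · obtain ⟨t, rfl⟩ : ∃ t : Fin Tini, i = k - Tini + t :=
        ⟨⟨(i - (k - Tini)).toNat, by omega⟩, by simp; omega⟩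
      rw [hpast]
      exact sum_congr rfl fun j _ => by ring_nf
    · obtain ⟨t, rfl⟩ : ∃ t : Fin N, i = k + t := ⟨⟨(i - k).toNat, by omega⟩, by simp; omega⟩
      rw [hfut]
      exact sum_congr rfl fun j _ => by ring_nf
  · intro h
    refine ⟨fun t a => ?_, fun t a => ?_⟩ <;> rw [h _ (by omega) (by omega), hcomb] <;>
      exact sum_congr rfl fun j _ => by ring_nf

theorem exists_hankelComb_eq {n m Tini N T : ℕ} {A : Matrix (Fin n) (Fin n) ℝ}
    {B : Matrix (Fin n) (Fin m) ℝ} (hctrb : (ctrbMat n m A B).rank = n)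
    {xd : ℤ → Fin n → ℝ} {ud : ℤ → Fin m → ℝ}
    (hxd : ∀ i : ℤ, 1 - Tini ≤ i → i ≤ T → xd (i + 1) = A *ᵥ xd i + B *ᵥ ud i)
    (hPE : PersistentlyExciting (Fin m) (n + Tini + N) T ud) (hL : 1 ≤ Tini + N)
    (hT : Tini + N ≤ T) (k : ℤ) (x₀ : Fin n → ℝ) (u : ℤ → Fin m → ℝ) :
    ∃ α : Fin (T - N + 1) → ℝ, hankelComb xd k α (k - Tini) = x₀ ∧
      ∀ i, k - Tini ≤ i → i ≤ k + N - 1 → u i = hankelComb ud k α i := by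
  rw [add_assoc] at hPE
  obtain ⟨α, hα⟩ := Matrix.mulVec_surjective_of_linearIndependent_row
    (linearIndependent_row_stateInputHankel (e := Tini) (K := T - N + 1) hctrb
      (fun i h₁ h₂ => hxd i (by omega) (by omega)) hPE (hPE.add_le hctrb hL hT)
      (by omega)) (Sum.elim x₀ fun q => u (k - Tini + q.1) q.2)
  rw [stateInputHankel, Matrix.fromRows_mulVec] at hα
  refine ⟨α, ?_, fun i hi₁ hi₂ => ?_⟩
  · ext a
    have := congrFun hα (Sum.inl a)
    simp only [Sum.elim_inl, Matrix.mulVec, dotProduct, Matrix.of_apply] at this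
    simp only [← this, hankelComb, Finset.sum_apply, Pi.smul_apply, smul_eq_mul]
    exact sum_congr rfl fun j _ => by ring_nf
  · obtain ⟨t, rfl⟩ : ∃ t : Fin (Tini + N), i = k - Tini + t :=
      ⟨⟨(i - (k - Tini)).toNat, by omega⟩, by simp; omega⟩
    ext a
    have := congrFun hα (Sum.inr (t, a))
    simp only [Sum.elim_inr, Matrix.mulVec, dotProduct, Matrix.of_apply] at this
    simp only [← this, hankelComb, Finset.sum_apply, Pi.smul_apply, smul_eq_mul]
    exact sum_congr rfl fun j _ => by ring_nf

theorem willems_fundamental_lemma_general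
    (n m p Tini N T : ℕ)
    (A : Matrix (Fin n) (Fin n) ℝ) (B : Matrix (Fin n) (Fin m) ℝ)
    (C : Matrix (Fin p) (Fin n) ℝ) (D : Matrix (Fin p) (Fin m) ℝ)
    (hctrb : (ctrbMat n m A B).rank = n)
    (hN : 1 ≤ N) (hT : Tini + N ≤ T)
    (ud : ℤ → Fin m → ℝ) (yd : ℤ → Fin p → ℝ)
    (hdata : ∃ xd : ℤ → Fin n → ℝ, ∀ i : ℤ, 1 - (Tini : ℤ) ≤ i → i ≤ (T : ℤ) →
      xd (i + 1) = A.mulVec (xd i) + B.mulVec (ud i) ∧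
      yd i = C.mulVec (xd i) + D.mulVec (ud i))
    (hPE : PersistentlyExciting (Fin m) (n + Tini + N) T ud) :
    ∀ k : ℕ, ∀ (u : ℤ → Fin m → ℝ) (y : ℤ → Fin p → ℝ),
      (∃ x : ℤ → Fin n → ℝ, ∀ i : ℤ, (k : ℤ) - (Tini : ℤ) ≤ i → i ≤ (k : ℤ) + (N : ℤ) - 1 →
        x (i + 1) = A.mulVec (x i) + B.mulVec (u i) ∧
        y i = C.mulVec (x i) + D.mulVec (u i))
      ↔
      (∃ α : Fin (T - N + 1) → ℝ,
        (Sum.elim (extState m p Tini u y (k : ℤ))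
          (Sum.elim (fun q : Fin N × Fin m => u ((k : ℤ) + (q.1 : ℕ)) q.2)
                    (fun q : Fin N × Fin p => y ((k : ℤ) + (q.1 : ℕ)) q.2)))
        =
        Matrix.mulVec
          (fun rj =>
            Sum.elim
              (fun ξidx => fun j : Fin (T - N + 1) =>
                extState m p Tini ud yd ((j : ℕ) + 1) ξidx)
              (Sum.elim
                (fun q : Fin N × Fin m => fun j : Fin (T - N + 1) =>
                  ud ((q.1 : ℕ) + (j : ℕ) + 1) q.2)
                (fun q : Fin N × Fin p => fun j : Fin (T - N + 1) =>
                  yd ((q.1 : ℕ) + (j : ℕ) + 1) q.2))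
              rj)
          α) := by
  intro k u y
  obtain ⟨xd, hxd⟩ := hdata
  have hcomb (α : Fin (T - N + 1) → ℝ) : IsTrajectory A B C D (k - Tini) (k + N - 1)
      (hankelComb xd k α) (hankelComb ud k α) (hankelComb yd k α) :=
    IsTrajectory.hankelComb hxd α (by omega) (by omega)
  change (∃ x, IsTrajectory A B C D (k - Tini) (k + N - 1) x u y) ↔ _
  simp only [funext_iff, Sum.forall, Prod.forall, Matrix.mulVec, dotProduct, extState,
    Sum.elim_inl, Sum.elim_inr]
  constructor
  · rintro ⟨x, hx⟩
    obtain ⟨α, hx₀, hu⟩ := exists_hankelComb_eq hctrb (fun i h₁ h₂ => (hxd i h₁ h₂).1) hPE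
      (by omega) hT k (x (k - Tini)) u
    have hy := IsTrajectory.output_eq hx (hcomb α) hx₀.symm hu
    obtain ⟨hu_past, hu_future⟩ := (forall_window_eq_hankelComb_iff u ud α k Tini N).mpr hu
    obtain ⟨hy_past, hy_future⟩ := (forall_window_eq_hankelComb_iff y yd α k Tini N).mpr hy
    exact ⟨α, ⟨hu_past, hy_past⟩, hu_future, hy_future⟩
  · rintro ⟨α, ⟨hu_past, hy_past⟩, hu_future, hy_future⟩
    have hu := (forall_window_eq_hankelComb_iff u ud α k Tini N).mp ⟨hu_past, hu_future⟩
    have hy := (forall_window_eq_hankelComb_iff y yd α k Tini N).mp ⟨hy_past, hy_future⟩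
    refine ⟨hankelComb xd k α, fun i h₁ h₂ => ?_⟩
    rw [hu i h₁ h₂, hy i h₁ h₂]
    exact hcomb α i h₁ h₂

/-- Lemma 1 of the paper: Willems' fundamental lemma, extended-state
version. For a controllable LTI system `x⁺ = Ax + Bu, y = Cx + Du`, `T_ini ≥ ℓ`
(the lag), `N ≥ 1`, `T ≥ T_ini + N`, and data `(u^d, y^d)` generated by the system
whose input sequence is persistently exciting of order `n + T_ini + N`: a pair of
sequences `(u_i, y_i)`, `i = k - T_ini, …, k + N - 1`, is a trajectory of the system
iff the stacked vector `col(ξ_k, u_{k..k+N-1}, y_{k..k+N-1})` lies in the range of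
the stacked Hankel matrix `col(H₁(ξ^d), H_N(u^d), H_N(y^d))`. -/
theorem willems_fundamental_lemma
    (n m p Tini N T : ℕ)
    (A : Matrix (Fin n) (Fin n) ℝ) (B : Matrix (Fin n) (Fin m) ℝ)
    (C : Matrix (Fin p) (Fin n) ℝ) (D : Matrix (Fin p) (Fin m) ℝ)
    (hctrb : (ctrbMat n m A B).rank = n)
    (hobs : ∃ j ≤ n, (obsMat n p A C j).rank = n)
    (hlag : sInf {j : ℕ | (obsMat n p A C j).rank = n} ≤ Tini)
    (hN : 1 ≤ N) (hT : Tini + N ≤ T)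
    (ud : ℤ → Fin m → ℝ) (yd : ℤ → Fin p → ℝ)
    (hdata : ∃ xd : ℤ → Fin n → ℝ, ∀ i : ℤ, 1 - (Tini : ℤ) ≤ i → i ≤ (T : ℤ) →
      xd (i + 1) = A.mulVec (xd i) + B.mulVec (ud i) ∧
      yd i = C.mulVec (xd i) + D.mulVec (ud i))
    (hPE : PersistentlyExciting (Fin m) (n + Tini + N) T ud) :
    ∀ k : ℕ, ∀ (u : ℤ → Fin m → ℝ) (y : ℤ → Fin p → ℝ),
      (∃ x : ℤ → Fin n → ℝ, ∀ i : ℤ, (k : ℤ) - (Tini : ℤ) ≤ i → i ≤ (k : ℤ) + (N : ℤ) - 1 →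
        x (i + 1) = A.mulVec (x i) + B.mulVec (u i) ∧
        y i = C.mulVec (x i) + D.mulVec (u i))
      ↔
      (∃ α : Fin (T - N + 1) → ℝ,
        (Sum.elim (extState m p Tini u y (k : ℤ))
          (Sum.elim (fun q : Fin N × Fin m => u ((k : ℤ) + (q.1 : ℕ)) q.2)
                    (fun q : Fin N × Fin p => y ((k : ℤ) + (q.1 : ℕ)) q.2)))
        =
        Matrix.mulVec
          (fun rj =>
            Sum.elim
              (fun ξidx => fun j : Fin (T - N + 1) =>
                extState m p Tini ud yd ((j : ℕ) + 1) ξidx)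
              (Sum.elim
                (fun q : Fin N × Fin m => fun j : Fin (T - N + 1) =>
                  ud ((q.1 : ℕ) + (j : ℕ) + 1) q.2)
                (fun q : Fin N × Fin p => fun j : Fin (T - N + 1) =>
                  yd ((q.1 : ℕ) + (j : ℕ) + 1) q.2))
              rj)
          α) :=
  willems_fundamental_lemma_general n m p Tini N T A B C D hctrb hN hT ud yd hdata hPE
end

section
/- Let ε, ε^c ∈ (0, 1). Let μ be a Borel probability measure on ℝ^{n_w}, and let G : ℝ^{n_w} → ℝ^{n_c × n_ζ} and g : ℝ^{n_w} → ℝ^{n_c} be Borel measurable. Define ℤ^P := { ζ : μ{ w : G(w)·ζ ≤ g(w) } ≥ 1 − ε } and Z̃(w) := { ζ : G(w)·ζ ≤ g(w) }. Let ζ_c ∈ ℤ^P and let Z^{SAS} ⊆ ℝ^{n_ζ} be a nonempty compact set; for σ ≥ 0 define the scalable simple approximating set Z^S(σ) := { ζ_c + σ·z : z ∈ Z^{SAS} }, and for each w define the scaling factor σ(w) := sup{ σ ≥ 0 : Z^S(σ) ⊆ Z̃(w) } if ζ_c ∈ Z̃(w) and σ(w) := 0 otherwise. Let N ∈ ℕ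 satisfy N ≥ (7.47/ε)·ln(1/ε^c) and set N_r := ⌈ε·N/2⌉. Then, with respect to the N-fold product measure μ^{⊗N}, the probability of the event { (w_1, …, w_N) : Z^S(σ*) ⊆ ℤ^P, where σ* is the N_r-th smallest value among σ(w_1), …, σ(w_N) } is at least 1 − ε^c. -/
/-!
For a sample `w`, let `Q σ` say that `ζ_c` and `Z^S(σ)` lie in `Z̃(w)`. Since `Z̃(w)` is convex
and contains `ζ_c`, `Q σ` shrinks as `σ` grows, and since `Z̃(w)` is closed, the set of `σ` with
`μ (Q σ) ≥ 1 - ε` is a closed interval `[0, q]` (or all of `[0, ∞)`). Every `σ` in it gives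
`Z^S(σ) ⊆ ℤ^P`. The samples lying in no `Q σ` with `σ > q` have probability at least `ε`, and each
has scaling factor at most `q`. So `σ* ≤ q` as soon as `N_r` of the `N` samples are of this kind,
and by a Chernoff bound this fails with probability at most `2^(N_r - 1) (1 - ε/2)^N ≤ ε^c`.
-/

open MeasureTheory Filter Topology Matrix

section Scaling

variable {E : Type*} [AddCommGroup E] [Module ℝ E] {C Z : Set E} {ζc : E}

theorem homothety_image_subset_of_le (hC : Convex ℝ C) (hζc : ζc ∈ C) {σ' σ : ℝ} (hσ' : 0 ≤ σ')
    (hσ'σ : σ' ≤ σ) (h : (fun z => ζc + σ • z) '' Z ⊆ C) :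
    (fun z => ζc + σ' • z) '' Z ⊆ C := by
  rintro _ ⟨z, hz, rfl⟩
  rcases hσ'.eq_or_lt with rfl | hσ'pos
  · simpa using hζc
  have hσ : 0 < σ := hσ'pos.trans_le hσ'σ
  have := hC.add_smul_mem hζc (h ⟨z, hz, rfl⟩) (t := σ' / σ)
    ⟨div_nonneg hσ' hσ.le, (div_le_one hσ).mpr hσ'σ⟩
  rwa [smul_smul, div_mul_cancel₀ _ hσ.ne'] at this

theorem isClosed_setOf_homothety_image_subset [TopologicalSpace E] [ContinuousAdd E]
    [ContinuousSMul ℝ E] (hC : IsClosed C) :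
    IsClosed {σ : ℝ | (fun z => ζc + σ • z) '' Z ⊆ C} := by
  have : {σ : ℝ | (fun z => ζc + σ • z) '' Z ⊆ C} =
      ⋂ z ∈ Z, (fun σ : ℝ => ζc + σ • z) ⁻¹' C := by
    ext σ
    simp [Set.subset_def]
  rw [this]
  exact isClosed_biInter fun z _ => hC.preimage (by fun_prop)

open Classical in
noncomputable def scalingFactor (C : Set E) (ζc : E) (Z : Set E) : ℝ :=
  if ζc ∈ C then sSup {σ : ℝ | 0 ≤ σ ∧ (fun z => ζc + σ • z) '' Z ⊆ C} else 0

theorem scalingFactor_nonneg : 0 ≤ scalingFactor C ζc Z := by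
  unfold scalingFactor
  split_ifs
  · exact Real.sSup_nonneg fun σ hσ => hσ.1
  · exact le_rfl

theorem scalingFactor_le (hC : Convex ℝ C) {σ : ℝ} (hσ : 0 ≤ σ)
    (h : ¬(ζc ∈ C ∧ (fun z => ζc + σ • z) '' Z ⊆ C)) : scalingFactor C ζc Z ≤ σ := by
  unfold scalingFactor
  split_ifs with hζc
  · refine Real.sSup_le (fun σ' hσ' => ?_) hσ
    by_contra! hlt
    exact h ⟨hζc, homothety_image_subset_of_le hC hζc hσ hlt.le hσ'.2⟩
  · exact hσ

end Scaling

theorem measurableSet_setOf_subset {α E : Type*} [MeasurableSpace α] [TopologicalSpace E]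
    [TopologicalSpace.PseudoMetrizableSpace E] {S : Set E} (hS : TopologicalSpace.IsSeparable S)
    {C : α → Set E} (hC : ∀ w, IsClosed (C w)) (hCm : ∀ z, MeasurableSet {w | z ∈ C w}) :
    MeasurableSet {w | S ⊆ C w} := by
  obtain ⟨D, hDS, hD, hSD⟩ := hS.exists_countable_dense_subset
  have : {w | S ⊆ C w} = ⋂ z ∈ D, {w | z ∈ C w} := by
    ext w
    simp only [Set.mem_ofPred_eq, Set.mem_iInter]
    exact ⟨fun h z hz => h (hDS hz), fun h => hSD.trans ((hC w).closure_subset_iff.mpr h)⟩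
  rw [this]
  exact MeasurableSet.biInter hD fun z _ => hCm z

section AdmissibleSamples

variable {α E : Type*} [AddCommGroup E] [Module ℝ E] {C : α → Set E} {ζc : E} {Z : Set E}

variable (C ζc Z) in
def admissibleSamples (σ : ℝ) : Set α :=
  {w | ζc ∈ C w ∧ (fun z => ζc + σ • z) '' Z ⊆ C w}

@[simp]
theorem admissibleSamples_zero : admissibleSamples C ζc Z 0 = {w | ζc ∈ C w} := by
  ext w
  simp +contextual [admissibleSamples, Set.subset_def]

theorem antitoneOn_admissibleSamples (hC : ∀ w, Convex ℝ (C w)) :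
    AntitoneOn (admissibleSamples C ζc Z) (Set.Ici 0) := fun _ hσ' _ _ hσ'σ _ hw =>
  ⟨hw.1, homothety_image_subset_of_le (hC _) hw.1 hσ' hσ'σ hw.2⟩

theorem homothety_image_subset_of_le_measure [MeasurableSpace α] {μ : Measure α} {c : ENNReal}
    {σ : ℝ} (h : c ≤ μ (admissibleSamples C ζc Z σ)) :
    (fun z => ζc + σ • z) '' Z ⊆ {ζ | c ≤ μ {w | ζ ∈ C w}} := fun _ hζ =>
  h.trans (measure_mono fun _ hw => hw.2 hζ)

variable [TopologicalSpace E]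

theorem isClosed_setOf_mem_admissibleSamples [ContinuousAdd E] [ContinuousSMul ℝ E]
    (hC : ∀ w, IsClosed (C w)) (w : α) : IsClosed {σ | w ∈ admissibleSamples C ζc Z σ} := by
  by_cases hζc : ζc ∈ C w
  · simpa [admissibleSamples, hζc] using isClosed_setOf_homothety_image_subset (hC w)
  · simp [admissibleSamples, hζc]

theorem measurableSet_admissibleSamples [MeasurableSpace α]
    [TopologicalSpace.PseudoMetrizableSpace E] [TopologicalSpace.SeparableSpace E]
    (hC : ∀ w, IsClosed (C w)) (hCm : ∀ z, MeasurableSet {w | z ∈ C w}) (σ : ℝ) :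
    MeasurableSet (admissibleSamples C ζc Z σ) := by
  simpa only [admissibleSamples, Set.insert_subset_iff] using
    measurableSet_setOf_subset (.of_separableSpace (insert ζc ((fun z => ζc + σ • z) '' Z)))
      hC hCm

end AdmissibleSamples

section Threshold

variable {α : Type*} [MeasurableSpace α] {μ : Measure α} [IsFiniteMeasure μ] {Q : ℝ → Set α}
  {c : ENNReal}

theorem le_measure_of_tendsto_of_antitoneOn (hQm : ∀ σ, MeasurableSet (Q σ))
    (hQ : AntitoneOn Q (Set.Ici 0)) (hQc : ∀ w, IsClosed {σ | w ∈ Q σ}) {u : ℕ → ℝ} {q : ℝ}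
    (hu : Monotone u) (hu0 : ∀ n, 0 ≤ u n) (huq : Tendsto u atTop (𝓝 q))
    (hc : ∀ n, c ≤ μ (Q (u n))) : c ≤ μ (Q q) := by
  have hanti : Antitone fun n => Q (u n) := fun m n hmn => hQ (hu0 m) (hu0 n) (hu hmn)
  have hsub : ⋂ n, Q (u n) ⊆ Q q := fun w hw =>
    (hQc w).mem_of_tendsto huq (Eventually.of_forall (Set.mem_iInter.mp hw))
  calc c ≤ ⨅ n, μ (Q (u n)) := le_iInf hc
    _ = μ (⋂ n, Q (u n)) :=
        (hanti.measure_iInter (fun n => (hQm _).nullMeasurableSet) ⟨0, measure_ne_top μ _⟩).symm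
    _ ≤ μ (Q q) := measure_mono hsub

/-- `A` is the complement of `⋃ σ > q, Q σ`, where `q` is the largest `σ` with `c ≤ μ (Q σ)`,
or `A = univ` if there is no largest one. -/
theorem exists_measurableSet_measure_compl_le_of_antitoneOn (hQm : ∀ σ, MeasurableSet (Q σ))
    (hQ : AntitoneOn Q (Set.Ici 0)) (hQc : ∀ w, IsClosed {σ | w ∈ Q σ}) (hc : c ≤ μ (Q 0))
    {f : α → ℝ} (hf0 : ∀ w, 0 ≤ f w) (hf : ∀ σ, 0 ≤ σ → ∀ w ∉ Q σ, f w ≤ σ) :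
    ∃ A, MeasurableSet A ∧ μ Aᶜ ≤ c ∧ ∀ w ∈ A, c ≤ μ (Q (f w)) := by
  set S := {σ | 0 ≤ σ ∧ c ≤ μ (Q σ)}
  have hS0 : (0 : ℝ) ∈ S := ⟨le_rfl, hc⟩
  by_cases hbdd : BddAbove S
  swap
  · refine ⟨Set.univ, MeasurableSet.univ, by simp, fun w _ => ?_⟩
    obtain ⟨σ, hσS, hlt⟩ := not_bddAbove_iff.mp hbdd (f w)
    exact hσS.2.trans (measure_mono (hQ (hf0 w) hσS.1 hlt.le))
  set q := sSup S
  have hq0 : 0 ≤ q := le_csSup hbdd hS0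
  have hqc : c ≤ μ (Q q) := by
    obtain ⟨u, hu, huq, huS⟩ := exists_seq_tendsto_sSup ⟨0, hS0⟩ hbdd
    exact le_measure_of_tendsto_of_antitoneOn hQm hQ hQc hu (fun n => (huS n).1) huq
      fun n => (huS n).2
  obtain ⟨v, hv, hqv, hvq⟩ := exists_seq_strictAnti_tendsto q
  have hv0 : ∀ n, 0 ≤ v n := fun n => hq0.trans (hqv n).le
  refine ⟨(⋃ n, Q (v n))ᶜ, (MeasurableSet.iUnion fun n => hQm _).compl, ?_, fun w hw => ?_⟩
  · have hmono : Monotone fun n => Q (v n) := fun m n hmn =>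
      hQ (hv0 n) (hv0 m) (hv.antitone hmn)
    rw [compl_compl, hmono.measure_iUnion]
    exact iSup_le fun n => (not_le.mp fun h => (hqv n).not_ge (le_csSup hbdd ⟨hv0 n, h⟩)).le
  · have hfv : ∀ n, f w ≤ v n := fun n =>
      hf _ (hv0 n) w fun hwQ => hw (Set.mem_iUnion_of_mem n hwQ)
    exact hqc.trans (measure_mono (hQ (hf0 w) hq0 (ge_of_tendsto' hvq hfv)))

end Threshold

section OrderStat

variable {ι : Type*} [Fintype ι]

/-- The `k`-th smallest of the values `f i`, counted with multiplicity (for `0 < k ≤ card ι`). -/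
noncomputable def orderStat (f : ι → ℝ) (k : ℕ) : ℝ :=
  sInf {t | k ≤ (Finset.univ.filter fun i => f i ≤ t).card}

theorem orderStat_nonneg {f : ι → ℝ} (hf : ∀ i, 0 ≤ f i) {k : ℕ} (hk : k ≠ 0) :
    0 ≤ orderStat f k := by
  refine Real.sInf_nonneg fun t ht => ?_
  obtain ⟨i, hi⟩ := Finset.card_pos.mp (Nat.pos_of_ne_zero hk |>.trans_le ht)
  exact (hf i).trans (Finset.mem_filter.mp hi).2

theorem orderStat_le {f : ι → ℝ} {k : ℕ} {t : ℝ} (hk : k ≠ 0)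
    (ht : k ≤ (Finset.univ.filter fun i => f i ≤ t).card) : orderStat f k ≤ t := by
  refine csInf_le ⟨⨅ i, f i, fun s hs => ?_⟩ ht
  obtain ⟨i, hi⟩ := Finset.card_pos.mp (Nat.pos_of_ne_zero hk |>.trans_le hs)
  exact (ciInf_le (Finite.bddBelow_range f) i).trans (Finset.mem_filter.mp hi).2

theorem exists_orderStat_le_of_le_card_filter {f : ι → ℝ} {p : ι → Prop} [DecidablePred p]
    {k : ℕ} (hk : k ≠ 0) (hp : k ≤ (Finset.univ.filter p).card) :
    ∃ i, p i ∧ orderStat f k ≤ f i := by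
  obtain ⟨i, hi, hmax⟩ := (Finset.univ.filter p).exists_max_image f
    (Finset.card_pos.mp (Nat.pos_of_ne_zero hk |>.trans_le hp))
  refine ⟨i, (Finset.mem_filter.mp hi).2, orderStat_le hk (hp.trans (Finset.card_le_card ?_))⟩
  exact fun j hj => Finset.mem_filter.mpr ⟨Finset.mem_univ j, hmax j hj⟩

end OrderStat

/-- The constant `7.47` exceeds `2 / (1 - log 2) ≈ 6.52`, which is what the bound needs. -/
theorem two_pow_mul_one_sub_half_pow_le {ε εc : ℝ} {m N : ℕ} (hε0 : 0 < ε) (hε2 : ε ≤ 2)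
    (hεc : 0 < εc) (hm : (m : ℝ) ≤ ε * N / 2) (hN : 7.47 / ε * Real.log (1 / εc) ≤ N) :
    2 ^ m * (1 - ε / 2) ^ N ≤ εc := by
  have hεN : 7.47 * Real.log (1 / εc) ≤ ε * N := by
    rwa [div_mul_eq_mul_div, div_le_iff₀ hε0, mul_comm (N : ℝ)] at hN
  have hlog2 : Real.log 2 < 0.6931471808 := Real.log_two_lt_d9
  have hexponent : m * Real.log 2 + -(ε / 2) * N ≤ Real.log εc := by
    have := mul_le_mul_of_nonneg_right hm (Real.log_nonneg one_le_two)
    rw [one_div, Real.log_inv] at hεN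
    nlinarith
  calc (2 : ℝ) ^ m * (1 - ε / 2) ^ N ≤ Real.exp (Real.log 2) ^ m * Real.exp (-(ε / 2)) ^ N := by
        rw [Real.exp_log two_pos]
        gcongr
        · linarith
        · exact Real.one_sub_le_exp_neg _
    _ = Real.exp (m * Real.log 2 + -(ε / 2) * N) := by
        rw [← Real.exp_nat_mul, ← Real.exp_nat_mul, ← Real.exp_add]
        ring_nf
    _ ≤ εc := by
        rw [← Real.exp_log hεc]
        exact Real.exp_le_exp.mpr hexponent

theorem exists_natCeil_eq_add_one {x : ℝ} (hx : 0 < x) :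
    ∃ m : ℕ, ⌈x⌉₊ = m + 1 ∧ (m : ℝ) < x := by
  obtain ⟨m, hm⟩ := Nat.exists_eq_add_one_of_ne_zero (Nat.ceil_pos.mpr hx).ne'
  refine ⟨m, hm, ?_⟩
  have := Nat.ceil_lt_add_one hx.le
  rw [hm] at this
  push_cast at this
  linarith

section Chernoff

variable {α ι : Type*} [MeasurableSpace α] [Fintype ι] (μ : Measure α) [IsProbabilityMeasure μ]
  {A : Set α} [DecidablePred (· ∈ A)]

theorem integral_ite_mem_half (hA : MeasurableSet A) :
    ∫ w, (if w ∈ A then (1 / 2 : ℝ) else 1) ∂μ = 1 - μ.real A / 2 := by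
  have : (fun w => if w ∈ A then (1 / 2 : ℝ) else 1) =
      fun w => 1 - A.indicator (fun _ => 1 / 2) w := by
    ext w
    by_cases h : w ∈ A <;> norm_num [h]
  rw [this, integral_sub (integrable_const _) ((integrable_const _).indicator hA),
    integral_indicator_const _ hA, integral_const, probReal_univ, smul_eq_mul, smul_eq_mul]
  ring

/-- Markov's inequality for `2⁻¹ ^ #{i | ws i ∈ A}`, whose expectation factorizes over the
product measure. -/
theorem measureReal_pi_card_filter_mem_le (hA : MeasurableSet A) (m : ℕ) :
    (Measure.pi fun _ : ι => μ).real {ws | (Finset.univ.filter fun i => ws i ∈ A).card ≤ m} ≤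
      2 ^ m * (1 - μ.real A / 2) ^ Fintype.card ι := by
  set μN := Measure.pi fun _ : ι => μ
  set h : α → ℝ := fun w => if w ∈ A then 1 / 2 else 1
  have hprod : ∀ ws : ι → α,
      ∏ i, h (ws i) = (1 / 2) ^ (Finset.univ.filter fun i => ws i ∈ A).card := by
    intro ws
    simp [h, Finset.prod_ite]
  have hint : Integrable (fun ws : ι → α => ∏ i, h (ws i)) μN := by
    have hmeas : Measurable h := Measurable.ite hA measurable_const measurable_const
    refine Integrable.of_bound
      (Finset.measurable_prod _ fun i _ => hmeas.comp (measurable_pi_apply i)).aestronglyMeasurable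
      1 (Eventually.of_forall fun ws => ?_)
    rw [hprod, Real.norm_eq_abs, abs_of_nonneg (by positivity)]
    exact pow_le_one₀ (by norm_num) (by norm_num)
  have markov := mul_meas_ge_le_integral_of_nonneg
    (Eventually.of_forall fun ws => by positivity) hint ((1 / 2) ^ m)
  rw [integral_fintype_prod_eq_pow, integral_ite_mem_half μ hA] at markov
  have hsub : {ws : ι → α | (Finset.univ.filter fun i => ws i ∈ A).card ≤ m} ⊆
      {ws | (1 / 2 : ℝ) ^ m ≤ ∏ i, h (ws i)} := fun ws hws => by
    rw [Set.mem_ofPred_eq, hprod]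
    exact pow_le_pow_of_le_one (by norm_num) (by norm_num) hws
  calc _ ≤ μN.real {ws | (1 / 2 : ℝ) ^ m ≤ ∏ i, h (ws i)} := measureReal_mono hsub
    _ = 2 ^ m * ((1 / 2) ^ m * μN.real {ws | (1 / 2 : ℝ) ^ m ≤ ∏ i, h (ws i)}) := by
        rw [← mul_assoc, ← mul_pow]
        norm_num
    _ ≤ _ := by gcongr

theorem measurable_card_filter_mem (hA : MeasurableSet A) :
    Measurable fun ws : ι → α => (Finset.univ.filter fun i => ws i ∈ A).card := by
  simp only [Finset.card_filter]
  exact Finset.measurable_sum _ fun i _ =>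
    Measurable.ite (measurable_pi_apply i hA) measurable_const measurable_const

theorem one_sub_le_measure_pi_lt_card_filter_mem (hA : MeasurableSet A) {ε εc : ℝ}
    (hμA : ε ≤ μ.real A) (hε0 : 0 < ε) (hεc : 0 < εc) {m N : ℕ} (hm : (m : ℝ) ≤ ε * N / 2)
    (hN : 7.47 / ε * Real.log (1 / εc) ≤ N) :
    ENNReal.ofReal (1 - εc) ≤
      Measure.pi (fun _ : Fin N => μ) {ws | m < (Finset.univ.filter fun i => ws i ∈ A).card} := by
  set μN := Measure.pi fun _ : Fin N => μ
  have hμA1 : μ.real A ≤ 1 := measureReal_le_one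
  have hlow : μN.real {ws | (Finset.univ.filter fun i => ws i ∈ A).card ≤ m} ≤ εc :=
    calc _ ≤ 2 ^ m * (1 - μ.real A / 2) ^ N := by
          simpa using measureReal_pi_card_filter_mem_le (ι := Fin N) μ hA m
      _ ≤ 2 ^ m * (1 - ε / 2) ^ N := by gcongr; linarith
      _ ≤ εc := two_pow_mul_one_sub_half_pow_le hε0 (by linarith) hεc hm hN
  have hcompl : {ws : Fin N → α | m < (Finset.univ.filter fun i => ws i ∈ A).card} =
      {ws | (Finset.univ.filter fun i => ws i ∈ A).card ≤ m}ᶜ := by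
    ext
    simp
  have hmeas : MeasurableSet
      {ws : Fin N → α | (Finset.univ.filter fun i => ws i ∈ A).card ≤ m} :=
    measurable_card_filter_mem hA measurableSet_Iic
  rw [← ofReal_measureReal, hcompl, probReal_compl_eq_one_sub hmeas]
  exact ENNReal.ofReal_le_ofReal (by linarith)

end Chernoff

theorem measurableSet_setOf_mulVec_le {α m n : Type*} [MeasurableSpace α] [Finite m] [Fintype n]
    {G : α → Matrix m n ℝ} (hG : ∀ i j, Measurable fun w => G w i j) {g : α → m → ℝ}
    (hg : Measurable g) (ζ : n → ℝ) : MeasurableSet {w | ∀ i, (G w *ᵥ ζ) i ≤ g w i} := by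
  rw [Set.ofPred_forall]
  refine MeasurableSet.iInter fun i => measurableSet_le ?_ (measurable_pi_iff.mp hg i)
  simp only [mulVec, dotProduct]
  fun_prop

theorem convex_setOf_mulVec_le {m n : Type*} [Fintype n] (M : Matrix m n ℝ) (b : m → ℝ) :
    Convex ℝ {ζ | ∀ i, (M *ᵥ ζ) i ≤ b i} :=
  (convex_Iic b).linear_preimage M.mulVecLin

theorem isClosed_setOf_mulVec_le {m n : Type*} [Fintype n] (M : Matrix m n ℝ) (b : m → ℝ) :
    IsClosed {ζ | ∀ i, (M *ᵥ ζ) i ≤ b i} :=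
  isClosed_le (continuous_const.matrix_mulVec continuous_id) continuous_const

theorem le_measureReal_of_measure_compl_le {α : Type*} [MeasurableSpace α] {μ : Measure α}
    [IsProbabilityMeasure μ] {A : Set α} (hA : MeasurableSet A) {ε : ℝ} (hε : ε ≤ 1)
    (h : μ Aᶜ ≤ ENNReal.ofReal (1 - ε)) : ε ≤ μ.real A := by
  have := ENNReal.toReal_le_of_le_ofReal (by linarith) h
  rw [← measureReal_def, probReal_compl_eq_one_sub hA] at this
  linarith

theorem one_sub_le_measure_pi_image_orderStat_subset {α E : Type*} [MeasurableSpace α]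
    {μ : Measure α} [IsProbabilityMeasure μ] [AddCommGroup E] [Module ℝ E] [TopologicalSpace E]
    [ContinuousAdd E] [ContinuousSMul ℝ E] [TopologicalSpace.PseudoMetrizableSpace E]
    [TopologicalSpace.SeparableSpace E] {C : α → Set E} (hconv : ∀ w, Convex ℝ (C w))
    (hclosed : ∀ w, IsClosed (C w)) (hmeas : ∀ ζ, MeasurableSet {w | ζ ∈ C w}) {ζc : E}
    (Z : Set E) {ε εc : ℝ} (hζc : ENNReal.ofReal (1 - ε) ≤ μ {w | ζc ∈ C w}) (hε0 : 0 < ε)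
    (hε1 : ε ≤ 1) (hεc : 0 < εc) {m N : ℕ} (hm : (m : ℝ) ≤ ε * N / 2)
    (hN : 7.47 / ε * Real.log (1 / εc) ≤ N) :
    ENNReal.ofReal (1 - εc) ≤ Measure.pi (fun _ : Fin N => μ)
      {ws | (fun z => ζc + orderStat (fun i => scalingFactor (C (ws i)) ζc Z) (m + 1) • z) '' Z ⊆
        {ζ | ENNReal.ofReal (1 - ε) ≤ μ {w | ζ ∈ C w}}} := by
  classical
  have hQ := antitoneOn_admissibleSamples hconv (ζc := ζc) (Z := Z)
  obtain ⟨A, hA, hAc, hAgood⟩ := exists_measurableSet_measure_compl_le_of_antitoneOn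
    (c := ENNReal.ofReal (1 - ε)) (measurableSet_admissibleSamples hclosed hmeas) hQ
    (isClosed_setOf_mem_admissibleSamples hclosed) (by rwa [admissibleSamples_zero])
    (fun w => scalingFactor_nonneg) (fun σ hσ w hw => scalingFactor_le (hconv w) hσ hw)
  refine (one_sub_le_measure_pi_lt_card_filter_mem μ hA
    (le_measureReal_of_measure_compl_le hA hε1 hAc) hε0 hεc hm hN).trans
    (measure_mono fun ws hws => ?_)
  set f := fun i => scalingFactor (C (ws i)) ζc Z
  obtain ⟨i, hiA, hi⟩ := exists_orderStat_le_of_le_card_filter (f := f) m.succ_ne_zero hws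
  have hσ0 : 0 ≤ orderStat f (m + 1) :=
    orderStat_nonneg (fun _ => scalingFactor_nonneg) m.succ_ne_zero
  exact homothety_image_subset_of_le_measure
    ((hAgood _ hiA).trans (measure_mono (hQ hσ0 scalingFactor_nonneg hi)))

open Matrix MeasureTheory Classical in
theorem probabilistic_scaling_general
    (nw nc nζ : ℕ)
    (ε εc : ℝ) (hε : ε ∈ Set.Ioo (0 : ℝ) 1) (hεc : εc ∈ Set.Ioo (0 : ℝ) 1)
    (μ : Measure (Fin nw → ℝ)) [IsProbabilityMeasure μ]
    (G : (Fin nw → ℝ) → Matrix (Fin nc) (Fin nζ) ℝ)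
    (hG : ∀ i j, Measurable fun w => G w i j)
    (g : (Fin nw → ℝ) → (Fin nc → ℝ)) (hg : Measurable g)
    (Ztilde : (Fin nw → ℝ) → Set (Fin nζ → ℝ))
    (hZtilde : ∀ w, Ztilde w = {ζ | ∀ i, (G w).mulVec ζ i ≤ g w i})
    (ZP : Set (Fin nζ → ℝ))
    (hZP : ZP = {ζ | ENNReal.ofReal (1 - ε) ≤ μ {w | ζ ∈ Ztilde w}})
    (ζc : Fin nζ → ℝ) (hζc : ζc ∈ ZP)
    (ZSAS : Set (Fin nζ → ℝ))
    (ZS : ℝ → Set (Fin nζ → ℝ))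
    (hZS : ∀ σ : ℝ, ZS σ = (fun z => ζc + σ • z) '' ZSAS)
    (sf : (Fin nw → ℝ) → ℝ)
    (hsf : ∀ w, sf w = if ζc ∈ Ztilde w then
        sSup {σ : ℝ | 0 ≤ σ ∧ ZS σ ⊆ Ztilde w} else 0)
    (N : ℕ) (hN : 7.47 / ε * Real.log (1 / εc) ≤ (N : ℝ))
    (Nr : ℕ) (hNr : Nr = ⌈ε * (N : ℝ) / 2⌉₊)
    (σstar : (Fin N → (Fin nw → ℝ)) → ℝ)
    -- `σstar ws` is the `N_r`-th smallest value among `sf (ws 1), …, sf (ws N)`: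
    (hσstar : ∀ ws, σstar ws =
      sInf {t : ℝ | Nr ≤ (Finset.univ.filter fun i : Fin N => sf (ws i) ≤ t).card}) :
    ENNReal.ofReal (1 - εc) ≤
      Measure.pi (fun _ : Fin N => μ)
        {ws : Fin N → (Fin nw → ℝ) | ZS (σstar ws) ⊆ ZP} := by
  obtain ⟨hε0, hε1⟩ := hε
  obtain ⟨hεc0, hεc1⟩ := hεc
  obtain rfl : ZS = fun σ => (fun z => ζc + σ • z) '' ZSAS := funext hZS
  obtain rfl : σstar = fun ws => orderStat (fun i => sf (ws i)) Nr := funext hσstar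
  obtain rfl : sf = fun w => scalingFactor (Ztilde w) ζc ZSAS := funext hsf
  subst hZP hNr
  have hεN : 0 < ε * N / 2 := by
    have := Real.log_pos (one_lt_one_div hεc0 hεc1)
    have : (0 : ℝ) < N := (by positivity : (0 : ℝ) < 7.47 / ε * Real.log (1 / εc)).trans_le hN
    positivity
  obtain ⟨m, hNr, hm⟩ := exists_natCeil_eq_add_one hεN
  rw [hNr]
  exact one_sub_le_measure_pi_image_orderStat_subset
    (fun w => hZtilde w ▸ convex_setOf_mulVec_le _ _)
    (fun w => hZtilde w ▸ isClosed_setOf_mulVec_le _ _)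
    (fun ζ => by
      simpa only [hZtilde, Set.mem_ofPred_eq] using measurableSet_setOf_mulVec_le hG hg ζ)
    ZSAS hζc hε0 hε1.le hεc0 hm.le hN

open Matrix MeasureTheory Classical in
/-- Proposition 5 of the paper: probabilistic scaling, Mammarella
et al.. Scaling a simple approximating set `Z^S(σ) = ζ_c ⊕ σ·(Z^{SAS})` centered at
`ζ_c ∈ ℤ^P` by the `N_r`-th smallest of the sample scaling factors `σ(w_1), …, σ(w_N)`
(`N_r = ⌈εN/2⌉`, `N ≥ (7.47/ε) ln(1/ε^c)`) yields, with probability at least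
`1 - ε^c` over the samples, an inner approximation `Z^S(σ*) ⊆ ℤ^P`. -/
theorem probabilistic_scaling
    (nw nc nζ : ℕ)
    (ε εc : ℝ) (hε : ε ∈ Set.Ioo (0 : ℝ) 1) (hεc : εc ∈ Set.Ioo (0 : ℝ) 1)
    (μ : Measure (Fin nw → ℝ)) [IsProbabilityMeasure μ]
    (G : (Fin nw → ℝ) → Matrix (Fin nc) (Fin nζ) ℝ)
    (hG : ∀ i j, Measurable fun w => G w i j)
    (g : (Fin nw → ℝ) → (Fin nc → ℝ)) (hg : Measurable g)
    (Ztilde : (Fin nw → ℝ) → Set (Fin nζ → ℝ))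
    (hZtilde : ∀ w, Ztilde w = {ζ | ∀ i, (G w).mulVec ζ i ≤ g w i})
    (ZP : Set (Fin nζ → ℝ))
    (hZP : ZP = {ζ | ENNReal.ofReal (1 - ε) ≤ μ {w | ζ ∈ Ztilde w}})
    (ζc : Fin nζ → ℝ) (hζc : ζc ∈ ZP)
    (ZSAS : Set (Fin nζ → ℝ)) (hZSASne : ZSAS.Nonempty) (hZSAScomp : IsCompact ZSAS)
    (ZS : ℝ → Set (Fin nζ → ℝ))
    (hZS : ∀ σ : ℝ, ZS σ = (fun z => ζc + σ • z) '' ZSAS)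
    (sf : (Fin nw → ℝ) → ℝ)
    (hsf : ∀ w, sf w = if ζc ∈ Ztilde w then
        sSup {σ : ℝ | 0 ≤ σ ∧ ZS σ ⊆ Ztilde w} else 0)
    (N : ℕ) (hN : 7.47 / ε * Real.log (1 / εc) ≤ (N : ℝ))
    (Nr : ℕ) (hNr : Nr = ⌈ε * (N : ℝ) / 2⌉₊)
    (σstar : (Fin N → (Fin nw → ℝ)) → ℝ)
    -- `σstar ws` is the `N_r`-th smallest value among `sf (ws 1), …, sf (ws N)`:
    (hσstar : ∀ ws, σstar ws =
      sInf {t : ℝ | Nr ≤ (Finset.univ.filter fun i : Fin N => sf (ws i) ≤ t).card}) :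
    ENNReal.ofReal (1 - εc) ≤
      Measure.pi (fun _ : Fin N => μ)
        {ws : Fin N → (Fin nw → ℝ) | ZS (σstar ws) ⊆ ZP} :=
  probabilistic_scaling_general nw nc nζ ε εc hε hεc μ G hG g hg Ztilde hZtilde ZP hZP ζc hζc ZSAS
    ZS hZS sf hsf N hN Nr hNr σstar hσstar
end

section
/- Let A_cl ∈ ℝ^{n×n}, K ∈ ℝ^{m×n}, E ∈ ℝ^{n×p}, and let R ∈ ℝ^{m×m} and Q ∈ ℝ^{p×p} be symmetric positive semidefinite. Set Q_P := Kᵀ R K + E Q Eᵀ. Suppose P̃ ∈ ℝ^{n×n} is symmetric with P̃ − Q_P positive definite, and suppose the 2n × 2n block matrix [[P̃ − Q_P, A_clᵀ P̃], [P̃ A_cl, P̃]] is positive definite. Then P := P̃ − E Q Eᵀ is symmetric positive definite and satisfies A_clᵀ P A_cl − P + Kᵀ R K + A_clᵀ E Q Eᵀ A_cl ≺ 0 (i.e., this matrix is negative definite). -/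
/-!
Writing `S := P̃ - Q_P`, the quadratic form of the block matrix at `(x, -A_cl x)` is
`xᵀ (S - A_clᵀ P̃ A_cl) x`, so positivity of the block matrix gives `S - A_clᵀ P̃ A_cl ≻ 0`,
which is exactly the dissipation inequality after substituting `P = P̃ - E Q Eᵀ`.
Positivity of `P` is `P = S + Kᵀ R K` with `Kᵀ R K ⪰ 0`.
-/

open Matrix

namespace Matrix

variable {m n R : Type*} [Fintype m] [Fintype n] [DecidableEq m]
  [Ring R] [PartialOrder R] [StarRing R]

omit [Fintype n] [PartialOrder R] [StarRing R] in
theorem fromRows_one_mulVec_injective (C : Matrix n m R) :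
    Function.Injective (fromRows (1 : Matrix m m R) C).mulVec := fun x y hxy => by
  simpa [fromRows_mulVec] using congrArg (fun v => v ∘ Sum.inl) hxy

theorem PosDef.sub_conjTranspose_mul_mul_of_fromBlocks {S : Matrix m m R} {C : Matrix n m R}
    {D : Matrix n n R} (h : (fromBlocks S (Cᴴ * D) (D * C) D).PosDef) :
    (S - Cᴴ * D * C).PosDef := by
  have hT := h.conjTranspose_mul_mul_same (fromRows_one_mulVec_injective (-C))
  rw [conjTranspose_fromRows_eq_fromCols_conjTranspose, fromCols_mul_fromBlocks,
    fromCols_mul_fromRows] at hT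
  convert hT using 1
  simp only [conjTranspose_one, conjTranspose_neg, Matrix.one_mul, Matrix.mul_one, Matrix.neg_mul,
    add_neg_cancel, Matrix.zero_mul, add_zero, Matrix.mul_assoc, sub_eq_add_neg]

end Matrix

theorem terminal_cost_design_general
    (n m p : ℕ)
    (Acl : Matrix (Fin n) (Fin n) ℝ) (K : Matrix (Fin m) (Fin n) ℝ)
    (E : Matrix (Fin n) (Fin p) ℝ)
    (R : Matrix (Fin m) (Fin m) ℝ) (Q : Matrix (Fin p) (Fin p) ℝ)
    (hR : R.PosSemidef)
    (QP : Matrix (Fin n) (Fin n) ℝ) (hQP : QP = Kᵀ * R * K + E * Q * Eᵀ)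
    (Pt : Matrix (Fin n) (Fin n) ℝ)
    (h1 : (Pt - QP).PosDef)
    (h2 : (Matrix.fromBlocks (Pt - QP) (Aclᵀ * Pt) (Pt * Acl) Pt).PosDef) :
    (Pt - E * Q * Eᵀ).PosDef ∧
      (-(Aclᵀ * (Pt - E * Q * Eᵀ) * Acl - (Pt - E * Q * Eᵀ)
          + Kᵀ * R * K + Aclᵀ * E * Q * Eᵀ * Acl)).PosDef := by
  have hKRK : (Kᵀ * R * K).PosSemidef := by
    simpa only [conjTranspose_eq_transpose_of_trivial] using hR.conjTranspose_mul_mul_same K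
  have hP : Pt - E * Q * Eᵀ = (Pt - QP) + Kᵀ * R * K := by
    rw [hQP]; abel
  have hSchur : (Pt - QP - Aclᴴ * Pt * Acl).PosDef := by
    rw [conjTranspose_eq_transpose_of_trivial]
    exact h2.sub_conjTranspose_mul_mul_of_fromBlocks
  refine ⟨hP ▸ h1.add_posSemidef hKRK, ?_⟩
  convert hSchur using 1
  rw [hQP, conjTranspose_eq_transpose_of_trivial,
    show Aclᵀ * E * Q * Eᵀ * Acl = Aclᵀ * (E * Q * Eᵀ) * Acl by simp only [Matrix.mul_assoc]]
  generalize E * Q * Eᵀ = G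
  generalize Kᵀ * R * K = S
  noncomm_ring

/-- correctness of the terminal-cost design, Appendix A, LMI (44).
If `P̃` is symmetric with `P̃ - Q_P ≻ 0` (`Q_P = Kᵀ R K + E Q Eᵀ`) and the block
matrix `[[P̃ - Q_P, A_clᵀ P̃], [P̃ A_cl, P̃]]` is positive definite, then
`P := P̃ - E Q Eᵀ` is positive definite and satisfies the dissipation inequality
`A_clᵀ P A_cl - P + Kᵀ R K + A_clᵀ E Q Eᵀ A_cl ≺ 0`. -/
theorem terminal_cost_design
    (n m p : ℕ)
    (Acl : Matrix (Fin n) (Fin n) ℝ) (K : Matrix (Fin m) (Fin n) ℝ)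
    (E : Matrix (Fin n) (Fin p) ℝ)
    (R : Matrix (Fin m) (Fin m) ℝ) (Q : Matrix (Fin p) (Fin p) ℝ)
    (hR : R.PosSemidef) (hQ : Q.PosSemidef)
    (QP : Matrix (Fin n) (Fin n) ℝ) (hQP : QP = Kᵀ * R * K + E * Q * Eᵀ)
    (Pt : Matrix (Fin n) (Fin n) ℝ) (hPt : Pt.IsSymm)
    (h1 : (Pt - QP).PosDef)
    (h2 : (Matrix.fromBlocks (Pt - QP) (Aclᵀ * Pt) (Pt * Acl) Pt).PosDef) :
    (Pt - E * Q * Eᵀ).PosDef ∧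
      (-(Aclᵀ * (Pt - E * Q * Eᵀ) * Acl - (Pt - E * Q * Eᵀ)
          + Kᵀ * R * K + Aclᵀ * E * Q * Eᵀ * Acl)).PosDef :=
  terminal_cost_design_general n m p Acl K E R Q hR QP hQP Pt h1 h2
end

section
/- Let Ã ∈ ℝ^{n×n}, B̃ ∈ ℝ^{n×m}, Ẽ ∈ ℝ^{n×p}, C̃ ∈ ℝ^{p×n}, D̃ ∈ ℝ^{p×m}. Suppose there exist L ∈ ℝ^{n×p} and a symmetric positive definite P₀ ∈ ℝ^{n×n} such that (Ã − L C̃)ᵀ P₀ (Ã − L C̃) − P₀ is negative definite. Then there exist a symmetric positive definite P_W ∈ ℝ^{n×n} and constants c_u, c_y, c_d > 0 such that for all ξ ∈ ℝⁿ, u ∈ ℝᵐ, d ∈ ℝᵖ, writing ξ⁺ := Ã ξ + B̃ u + Ẽ d and y := C̃ ξ + D̃ u + d, it holds that (ξ⁺)ᵀ P_W ξ⁺ − ξᵀ P_W ξ ≤ −(1/2)‖ξ‖² + c_u ‖u‖² + c_y ‖y‖² + c_d ‖d‖². -/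
/-!
Output injection rewrites the dynamics as `ξ⁺ = (Ã - L C̃) ξ + v` with
`v = (B̃ - L D̃) u + (Ẽ - L) d + L y`, so it suffices that `x ↦ xᵀ P₀ x` is an ISS Lyapunov
function for `x⁺ = A x + v` whenever `P₀ - Aᵀ P₀ A ≻ 0`. Young's inequality gives
`q(A x + v) ≤ (1 + ε) q(A x) + (1 + ε⁻¹) q(v)`; choosing `ε` so that `ε q(A x)` eats only half
of the decrease `P₀ - Aᵀ P₀ A ≥ c` leaves a decrease of `c / 2`, which rescaling `P₀` normalises
to `1 / 2`. The constants come from the extreme points of the compact spectra.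
-/

open Matrix

open scoped MatrixOrder

namespace Matrix

variable {ι κ : Type*} [Fintype ι]

theorem dotProduct_mulVec_le_of_le {A B : Matrix ι ι ℝ} (h : A ≤ B) (x : ι → ℝ) :
    x ⬝ᵥ A *ᵥ x ≤ x ⬝ᵥ B *ᵥ x := by
  simpa [sub_mulVec, dotProduct_sub] using (le_iff.1 h).dotProduct_mulVec_nonneg x

theorem mulVec_dotProduct_mulVec_mulVec [Fintype κ] (M : Matrix κ ι ℝ) (P : Matrix κ κ ℝ)
    (x : ι → ℝ) : (M *ᵥ x) ⬝ᵥ P *ᵥ (M *ᵥ x) = x ⬝ᵥ (Mᵀ * P * M) *ᵥ x := by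
  rw [← mulVec_mulVec, ← mulVec_mulVec, dotProduct_mulVec x, vecMul_transpose]

theorem PosDef.exists_pos_mul_dotProduct_self_le {Q : Matrix ι ι ℝ} (hQ : Q.PosDef) :
    ∃ c > 0, ∀ x : ι → ℝ, c * (x ⬝ᵥ x) ≤ x ⬝ᵥ Q *ᵥ x := by
  classical
  obtain ⟨c, hc, hc_le⟩ := (isCompact_iff_compactSpace.mpr inferInstance :
    IsCompact (spectrum ℝ Q)).exists_forall_le' continuousOn_id (a := 0)
    fun _ hx ↦ (isStrictlyPositive_iff_posDef.2 hQ).spectrum_pos hx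
  refine ⟨c, hc, fun x ↦ ?_⟩
  simpa [Algebra.algebraMap_eq_smul_one, smul_mulVec] using dotProduct_mulVec_le_of_le
    ((algebraMap_le_iff_le_spectrum hQ.isHermitian.isSelfAdjoint).2 hc_le) x

theorem IsHermitian.exists_dotProduct_mulVec_le {M : Matrix ι ι ℝ} (hM : M.IsHermitian) :
    ∃ C > 0, ∀ x : ι → ℝ, x ⬝ᵥ M *ᵥ x ≤ C * (x ⬝ᵥ x) := by
  classical
  obtain ⟨C, hC⟩ := (isCompact_iff_compactSpace.mpr inferInstance :
    IsCompact (spectrum ℝ M)).bddAbove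
  refine ⟨max C 1, lt_max_of_lt_right one_pos, fun x ↦ ?_⟩
  simpa [Algebra.algebraMap_eq_smul_one, smul_mulVec] using dotProduct_mulVec_le_of_le
    ((le_algebraMap_iff_spectrum_le hM.isSelfAdjoint).2 fun _ hx ↦ (hC hx).trans
      (le_max_left C 1)) x

theorem exists_mulVec_dotProduct_mulVec_le [Fintype κ] (M : Matrix κ ι ℝ) :
    ∃ C > 0, ∀ x : ι → ℝ, (M *ᵥ x) ⬝ᵥ (M *ᵥ x) ≤ C * (x ⬝ᵥ x) := by
  obtain ⟨C, hC, hle⟩ := (isHermitian_conjTranspose_mul_self M).exists_dotProduct_mulVec_le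
  refine ⟨C, hC, fun x ↦ ?_⟩
  rw [dotProduct_mulVec, ← mulVec_transpose, mulVec_mulVec, dotProduct_comm]
  simpa [conjTranspose_eq_transpose_of_trivial] using hle x

theorem PosSemidef.dotProduct_mulVec_add_le {P : Matrix ι ι ℝ} (hP : P.PosSemidef) {ε : ℝ}
    (hε : 0 < ε) (a v : ι → ℝ) :
    (a + v) ⬝ᵥ P *ᵥ (a + v) ≤ (1 + ε) * (a ⬝ᵥ P *ᵥ a) + (1 + ε⁻¹) * (v ⬝ᵥ P *ᵥ v) := by
  have hsymm : v ⬝ᵥ P *ᵥ a = a ⬝ᵥ P *ᵥ v := by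
    rw [dotProduct_mulVec, ← mulVec_transpose, dotProduct_comm,
      ← conjTranspose_eq_transpose_of_trivial, hP.isHermitian.eq]
  have hsq := hP.dotProduct_mulVec_nonneg (ε • a - v)
  simp only [star_trivial, mulVec_sub, mulVec_smul, dotProduct_sub, sub_dotProduct,
    dotProduct_smul, smul_dotProduct, smul_eq_mul, hsymm] at hsq
  have hcross : 2 * (a ⬝ᵥ P *ᵥ v) ≤ ε * (a ⬝ᵥ P *ᵥ a) + ε⁻¹ * (v ⬝ᵥ P *ᵥ v) := by
    rw [← mul_le_mul_iff_of_pos_left hε]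
    field_simp
    nlinarith
  simp only [mulVec_add, dotProduct_add, add_dotProduct, hsymm]
  linarith

theorem PosSemidef.dotProduct_mulVec_add_add_le {P : Matrix ι ι ℝ} (hP : P.PosSemidef)
    (a b c : ι → ℝ) :
    (a + b + c) ⬝ᵥ P *ᵥ (a + b + c) ≤
      3 * (a ⬝ᵥ P *ᵥ a + b ⬝ᵥ P *ᵥ b + c ⬝ᵥ P *ᵥ c) := by
  have hab := hP.dotProduct_mulVec_add_le one_pos a b
  have habc := hP.dotProduct_mulVec_add_le (one_half_pos (α := ℝ)) (a + b) c
  linarith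

theorem PosDef.exists_dissipation_of_lyapunov {A P : Matrix ι ι ℝ} (hP : P.PosDef)
    (hA : (-(Aᵀ * P * A - P)).PosDef) :
    ∃ c > 0, ∃ K > 0, ∀ x v : ι → ℝ,
      (A *ᵥ x + v) ⬝ᵥ P *ᵥ (A *ᵥ x + v) - x ⬝ᵥ P *ᵥ x ≤ -c * (x ⬝ᵥ x) + K * (v ⬝ᵥ v) := by
  obtain ⟨c, hc, hdecay⟩ := hA.exists_pos_mul_dotProduct_self_le
  obtain ⟨CA, hCA, hAx⟩ :=
    (isHermitian_conjTranspose_mul_mul A hP.isHermitian).exists_dotProduct_mulVec_le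
  obtain ⟨CP, hCP, hv⟩ := hP.isHermitian.exists_dotProduct_mulVec_le
  set ε := c / (2 * CA)
  have hε : 0 < ε := by positivity
  refine ⟨c / 2, by positivity, (1 + ε⁻¹) * CP, by positivity, fun x v ↦ ?_⟩
  have hdecay_x : c * (x ⬝ᵥ x) ≤ x ⬝ᵥ P *ᵥ x - (A *ᵥ x) ⬝ᵥ P *ᵥ (A *ᵥ x) := by
    rw [mulVec_dotProduct_mulVec_mulVec]
    simpa [neg_mulVec, sub_mulVec, dotProduct_sub] using hdecay x
  have habsorb : ε * ((A *ᵥ x) ⬝ᵥ P *ᵥ (A *ᵥ x)) ≤ c / 2 * (x ⬝ᵥ x) := by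
    have hAx_le := hAx x
    rw [conjTranspose_eq_transpose_of_trivial, ← mulVec_dotProduct_mulVec_mulVec] at hAx_le
    calc ε * ((A *ᵥ x) ⬝ᵥ P *ᵥ (A *ᵥ x)) ≤ ε * (CA * (x ⬝ᵥ x)) := by gcongr
      _ = c / 2 * (x ⬝ᵥ x) := by simp only [ε]; field_simp
  have hyoung := hP.posSemidef.dotProduct_mulVec_add_le hε (A *ᵥ x) v
  have hv_le := mul_le_mul_of_nonneg_left (hv v) (by positivity : 0 ≤ 1 + ε⁻¹)
  linarith

theorem PosDef.exists_iss_lyapunov {A P : Matrix ι ι ℝ} (hP : P.PosDef)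
    (hA : (-(Aᵀ * P * A - P)).PosDef) :
    ∃ PW : Matrix ι ι ℝ, PW.PosDef ∧ ∃ K > 0, ∀ x v : ι → ℝ,
      (A *ᵥ x + v) ⬝ᵥ PW *ᵥ (A *ᵥ x + v) - x ⬝ᵥ PW *ᵥ x ≤
        -(1 / 2) * (x ⬝ᵥ x) + K * (v ⬝ᵥ v) := by
  obtain ⟨c, hc, K, hK, hdiss⟩ := hP.exists_dissipation_of_lyapunov hA
  refine ⟨(2 * c)⁻¹ • P, hP.smul (by positivity), (2 * c)⁻¹ * K, by positivity, fun x v ↦ ?_⟩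
  have hscaled := mul_le_mul_of_nonneg_left (hdiss x v) (by positivity : 0 ≤ (2 * c)⁻¹)
  have hnormalize : (2 * c)⁻¹ * c = 1 / 2 := by field_simp
  simp only [smul_mulVec, dotProduct_smul, smul_eq_mul]
  linear_combination hscaled - (x ⬝ᵥ x) * hnormalize

end Matrix

/-- existence of an IOSS Lyapunov function, equation (39) of the
paper. If detectability is certified by an output-injection Lyapunov inequality
`(Ã - L C̃)ᵀ P₀ (Ã - L C̃) - P₀ ≺ 0` with `P₀ ≻ 0`, then there exist `P_W ≻ 0` and
constants `c_u, c_y, c_d > 0` such that `W(ξ) = ξᵀ P_W ξ` satisfies the IOSS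
dissipation inequality
`W(ξ⁺) - W(ξ) ≤ -½‖ξ‖² + c_u‖u‖² + c_y‖y‖² + c_d‖d‖²`
along `ξ⁺ = Ã ξ + B̃ u + Ẽ d`, `y = C̃ ξ + D̃ u + d`. -/
theorem IOSS_Lyapunov_exists
    (n m p : ℕ)
    (At : Matrix (Fin n) (Fin n) ℝ) (Bt : Matrix (Fin n) (Fin m) ℝ)
    (Et : Matrix (Fin n) (Fin p) ℝ)
    (Ct : Matrix (Fin p) (Fin n) ℝ) (Dt : Matrix (Fin p) (Fin m) ℝ)
    (L : Matrix (Fin n) (Fin p) ℝ) (P0 : Matrix (Fin n) (Fin n) ℝ)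
    (hP0 : P0.PosDef)
    (hdet : (-((At - L * Ct)ᵀ * P0 * (At - L * Ct) - P0)).PosDef) :
    ∃ PW : Matrix (Fin n) (Fin n) ℝ, PW.PosDef ∧
      ∃ cu cy cd : ℝ, 0 < cu ∧ 0 < cy ∧ 0 < cd ∧
        ∀ (ξ : Fin n → ℝ) (u : Fin m → ℝ) (d : Fin p → ℝ),
          (At.mulVec ξ + Bt.mulVec u + Et.mulVec d) ⬝ᵥ
              PW.mulVec (At.mulVec ξ + Bt.mulVec u + Et.mulVec d)
            - ξ ⬝ᵥ PW.mulVec ξ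
          ≤ -(1 / 2) * (ξ ⬝ᵥ ξ) + cu * (u ⬝ᵥ u)
            + cy * ((Ct.mulVec ξ + Dt.mulVec u + d) ⬝ᵥ (Ct.mulVec ξ + Dt.mulVec u + d))
            + cd * (d ⬝ᵥ d) := by
  obtain ⟨PW, hPW, K, hK, hiss⟩ := hP0.exists_iss_lyapunov hdet
  obtain ⟨Cu, hCu, hu⟩ := exists_mulVec_dotProduct_mulVec_le (Bt - L * Dt)
  obtain ⟨Cd, hCd, hd⟩ := exists_mulVec_dotProduct_mulVec_le (Et - L)
  obtain ⟨Cy, hCy, hy⟩ := exists_mulVec_dotProduct_mulVec_le L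
  refine ⟨PW, hPW, 3 * K * Cu, 3 * K * Cy, 3 * K * Cd, by positivity, by positivity,
    by positivity, fun ξ u d ↦ ?_⟩
  set y := Ct *ᵥ ξ + Dt *ᵥ u + d
  set v := (Bt - L * Dt) *ᵥ u + (Et - L) *ᵥ d + L *ᵥ y
  have hsplit : At *ᵥ ξ + Bt *ᵥ u + Et *ᵥ d = (At - L * Ct) *ᵥ ξ + v := by
    simp only [v, y, sub_mulVec, mulVec_add, mulVec_mulVec]
    abel
  have hv : v ⬝ᵥ v ≤ 3 * (Cu * (u ⬝ᵥ u) + Cd * (d ⬝ᵥ d) + Cy * (y ⬝ᵥ y)) := by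
    have h3 := PosSemidef.one.dotProduct_mulVec_add_add_le
      ((Bt - L * Dt) *ᵥ u) ((Et - L) *ᵥ d) (L *ᵥ y)
    simp only [one_mulVec] at h3
    linarith [hu u, hd d, hy y]
  rw [hsplit]
  linarith [hiss ξ v, mul_le_mul_of_nonneg_left hv hK.le]
end
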